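/- arXiv:1905.02481 — 8 statements merged into one kernel-verified Lean document; each statement's English description precedes it below -/
import Mathlib

section
/- Let V be a valuation domain with quotient field K and maximal ideal M, and let I be a fractional ideal of V. Then I is not strictly divisorial if and only if I = cM for some c in K. -/
open scoped Pointwise Classical

section Defs

variable {K : Type*} [Field K] {Γ : Type*} [LinearOrderedCommGroupWithZero Γ]
variable {Λ : Type*} [LinearOrder Λ]

/-- `E = {s ν}` is pseudo-convergent: (additively) `v(s_ρ−s_ν) < v(s_σ−s_ρ)` for `ν<ρ<σ`.
In Mathlib's multiplicative convention this reads `v (s σ - s ρ) < v (s ρ - s ν)`. -/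
def IsPseudoConvergent (v : Valuation K Γ) (s : Λ → K) : Prop :=
  ∀ ⦃ν ρ σ : Λ⦄, ν < ρ → ρ < σ → v (s σ - s ρ) < v (s ρ - s ν)

/-- `E = {s ν}` is pseudo-divergent: (additively) `v(s_ρ−s_ν) > v(s_σ−s_ρ)` for `ν<ρ<σ`. -/
def IsPseudoDivergent (v : Valuation K Γ) (s : Λ → K) : Prop :=
  ∀ ⦃ν ρ σ : Λ⦄, ν < ρ → ρ < σ → v (s ρ - s ν) < v (s σ - s ρ)

/-- `E = {s ν}` is pseudo-stationary: the terms are distinct and all pairwise differences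
have the same (nonzero) value. -/
def IsPseudoStationary (v : Valuation K Γ) (s : Λ → K) : Prop :=
  (∀ ⦃ν μ : Λ⦄, ν ≠ μ → s ν ≠ s μ) ∧
    ∀ ⦃ν μ ν' μ' : Λ⦄, ν ≠ μ → ν' ≠ μ' → v (s ν - s μ) = v (s ν' - s μ')

/-- A pseudo-monotone sequence: pseudo-convergent, pseudo-divergent or pseudo-stationary. -/
def IsPseudoMonotone (v : Valuation K Γ) (s : Λ → K) : Prop :=
  IsPseudoConvergent v s ∨ IsPseudoDivergent v s ∨ IsPseudoStationary v s

/-- `α` is a pseudo-limit of the pseudo-convergent sequence `s`: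
`v(α − s_ν) = δ_ν` for all `ν`, where `δ_ν = v(s_ρ − s_ν)` for any `ρ > ν`. -/
def IsPseudoLimitPcv (v : Valuation K Γ) (s : Λ → K) (α : K) : Prop :=
  ∀ ⦃ν ρ : Λ⦄, ν < ρ → v (α - s ν) = v (s ρ - s ν)

/-- `α` is a pseudo-limit of the pseudo-divergent sequence `s`:
`v(α − s_ν) = δ_ν` for all sufficiently large `ν`, where `δ_ν = v(s_ρ − s_ν)` for any `ρ < ν`. -/
def IsPseudoLimitPdv (v : Valuation K Γ) (s : Λ → K) (α : K) : Prop :=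
  ∃ N : Λ, ∀ ⦃ν : Λ⦄, N ≤ ν → ∀ ⦃ρ : Λ⦄, ρ < ν → v (α - s ν) = v (s ρ - s ν)

/-- `α` is a pseudo-limit of the pseudo-stationary sequence `s`:
`v(α − s_ν) = δ` for all sufficiently large `ν`, where `δ` is the breadth. -/
def IsPseudoLimitPst (v : Valuation K Γ) (s : Λ → K) (α : K) : Prop :=
  ∃ N : Λ, ∀ ⦃ν : Λ⦄, N ≤ ν → ∀ ⦃μ μ' : Λ⦄, μ ≠ μ' → v (α - s ν) = v (s μ - s μ')

/-- `α` is a pseudo-limit of a strictly pseudo-monotone sequence `s`. -/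
def IsPseudoLimitSPM (v : Valuation K Γ) (s : Λ → K) (α : K) : Prop :=
  (IsPseudoConvergent v s ∧ IsPseudoLimitPcv v s α) ∨
    (IsPseudoDivergent v s ∧ IsPseudoLimitPdv v s α)

/-- The breadth ideal of a pseudo-convergent sequence:
(additively) `{x : v(x) > δ_ν for all ν}`. -/
def BreadthPcv (v : Valuation K Γ) (s : Λ → K) : Set K :=
  {x : K | ∀ ⦃ν ρ : Λ⦄, ν < ρ → v x < v (s ρ - s ν)}

/-- The breadth ideal of a pseudo-divergent sequence:
(additively) `{x : v(x) > δ_ν for some ν}`. -/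
def BreadthPdv (v : Valuation K Γ) (s : Λ → K) : Set K :=
  {x : K | ∃ ν ρ : Λ, ρ < ν ∧ v x < v (s ρ - s ν)}

/-- The breadth ideal of a pseudo-stationary sequence: (additively) `{x : v(x) ≥ δ}`. -/
def BreadthPst (v : Valuation K Γ) (s : Λ → K) : Set K :=
  {x : K | ∀ ⦃ν μ : Λ⦄, ν ≠ μ → v x ≤ v (s ν - s μ)}

/-- The breadth ideal of a sequence which is definitively either pseudo-convergent or
pseudo-stationary: `{x : v(x) ≤ v(s ρ - s ν)` for all sufficiently large `ν < ρ}`. -/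
def BreadthCvStat (v : Valuation K Γ) (s : Λ → K) : Set K :=
  {x : K | ∃ N : Λ, ∀ ⦃ν ρ : Λ⦄, N ≤ ν → ν < ρ → v x ≤ v (s ρ - s ν)}

/-- The ring `V_E` of rational functions mapping the tail of `E` into the valuation ring,
as a subset of `K(X)`. -/
def VESet (v : Valuation K Γ) (s : Λ → K) : Set (RatFunc K) :=
  {φ : RatFunc K | ∃ N : Λ, ∀ ⦃ν : Λ⦄, N ≤ ν → v (RatFunc.eval (RingHom.id K) (s ν) φ) ≤ 1}

end Defs

section FracIdeals

variable {K : Type*} [Field K]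

/-- `I` is a fractional ideal of the valuation subring `A` of `K`. -/
def IsFractionalSub (A : ValuationSubring K) (I : Submodule A K) : Prop :=
  ∃ a : K, a ∈ A ∧ a ≠ 0 ∧ ∀ x ∈ I, a * x ∈ A

/-- `I` is strictly divisorial: it equals the intersection of all principal fractional
ideals properly containing it. -/
def IsStrictlyDivisorial (A : ValuationSubring K) (I : Submodule A K) : Prop :=
  I = ⨅ c ∈ {c : K | I < Submodule.span A {c}}, Submodule.span A {c}

end FracIdeals

/-!
Since `x ∈ dV ↔ v x ≤ v d` in a valuation domain, an element `x ∉ I` bounds `I` strictly: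
`I ⊆ xM`. If `I ⊊ xM`, any `y ∈ xM \ I` gives a principal ideal `yV ⊋ I` with `x ∉ yV`, so
`x` is cut out. Hence `I` fails to be strictly divisorial only if `I = xM`; conversely, if
`I = cM` with `c ≠ 0`, every principal ideal properly containing `I` contains `c ∉ I`.
-/

namespace ValuationSubring

variable {K : Type*} [Field K] (A : ValuationSubring K)

theorem mem_span_singleton_iff_valuation_le {x d : K} :
    x ∈ Submodule.span A {d} ↔ A.valuation x ≤ A.valuation d := by
  rw [Submodule.mem_span_singleton, valuation_le_iff]
  rfl

theorem mem_smul_setOf_valuation_lt_one_iff {c : K} (hc : c ≠ 0) {x : K} :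
    x ∈ c • {y : K | A.valuation y < 1} ↔ A.valuation x < A.valuation c := by
  have hvc : 0 < A.valuation c := zero_lt_iff.mpr ((Valuation.ne_zero_iff _).mpr hc)
  rw [Set.mem_smul_set_iff_inv_smul_mem₀ hc, Set.mem_ofPred_eq, smul_eq_mul, map_mul, map_inv₀,
    inv_mul_lt_iff₀ hvc, mul_one]

variable {A}

theorem valuation_lt_of_mem_of_notMem {I : Submodule A K} {z x : K} (hz : z ∈ I) (hx : x ∉ I) :
    A.valuation z < A.valuation x :=
  lt_of_not_ge fun h =>
    hx ((Submodule.span_singleton_le_iff_mem z I).mpr hz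
      ((mem_span_singleton_iff_valuation_le A).mpr h))

theorem lt_span_singleton_of_notMem {I : Submodule A K} {y : K} (hy : y ∉ I) :
    I < Submodule.span A {y} :=
  lt_of_le_of_ne
    (fun _ hz => (mem_span_singleton_iff_valuation_le A).mpr (valuation_lt_of_mem_of_notMem hz hy).le)
    (fun h => hy (h ▸ Submodule.mem_span_singleton_self y))

theorem isStrictlyDivisorial_of_forall_coe_ne_smul {I : Submodule A K}
    (h : ∀ c : K, (I : Set K) ≠ c • {x : K | A.valuation x < 1}) : IsStrictlyDivisorial A I := by
  refine le_antisymm (le_iInf₂ fun d hd => hd.le) fun x hx => ?_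
  by_contra hxI
  have hx0 : x ≠ 0 := fun h => hxI (h ▸ I.zero_mem)
  have hIx : (I : Set K) ⊆ x • {y : K | A.valuation y < 1} := fun z hz =>
    (mem_smul_setOf_valuation_lt_one_iff A hx0).mpr (valuation_lt_of_mem_of_notMem hz hxI)
  obtain ⟨y, hyx, hyI⟩ := Set.exists_of_ssubset (hIx.ssubset_of_ne (h x))
  have hxy : x ∈ Submodule.span A {y} :=
    (Submodule.mem_iInf _).mp ((Submodule.mem_iInf _).mp hx y) (lt_span_singleton_of_notMem hyI)
  exact ((mem_smul_setOf_valuation_lt_one_iff A hx0).mp hyx).not_ge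
    ((mem_span_singleton_iff_valuation_le A).mp hxy)

theorem not_isStrictlyDivisorial_of_coe_eq_smul {I : Submodule A K} {c : K} (hc : c ≠ 0)
    (hI : (I : Set K) = c • {x : K | A.valuation x < 1}) : ¬ IsStrictlyDivisorial A I := by
  have hcI : c ∉ I := fun h => lt_irrefl (A.valuation c)
    ((mem_smul_setOf_valuation_lt_one_iff A hc).mp (hI ▸ SetLike.mem_coe.mpr h))
  -- A principal ideal `dV ⊋ I = cM` has `v c ≤ v d`, since otherwise `dV ⊆ cM`.
  intro hI'
  apply hcI
  rw [hI', Submodule.mem_iInf]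
  refine fun d => (Submodule.mem_iInf _).mpr fun hd => ?_
  rw [mem_span_singleton_iff_valuation_le]
  by_contra! hdc
  refine (show I < Submodule.span A {d} from hd).not_ge fun z hz => ?_
  change z ∈ (I : Set K)
  rw [hI, mem_smul_setOf_valuation_lt_one_iff A hc]
  exact ((mem_span_singleton_iff_valuation_le A).mp hz).trans_lt hdc

end ValuationSubring

theorem stmt0_general {K : Type*} [Field K] (A : ValuationSubring K) (I : Submodule A K)
    (hI0 : I ≠ ⊥) :
    ¬ IsStrictlyDivisorial A I ↔
      ∃ c : K, (I : Set K) = c • {x : K | A.valuation x < 1} := by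
  refine ⟨fun hI => ?_, fun ⟨c, hc⟩ => ?_⟩
  · by_contra! h
    exact hI (ValuationSubring.isStrictlyDivisorial_of_forall_coe_ne_smul h)
  · refine ValuationSubring.not_isStrictlyDivisorial_of_coe_eq_smul (fun hc0 => hI0 ?_) hc
    rw [hc0, Set.zero_smul_set ⟨0, by simp⟩] at hc
    exact SetLike.coe_injective (hc.trans Submodule.bot_coe.symm)

/-- Let `V` be a valuation domain with quotient field `K` and maximal ideal
`M`, and let `I` be a (nonzero) fractional ideal of `V`. Then `I` is not strictly divisorial
if and only if `I = cM` for some `c ∈ K`. Here the maximal ideal of `V`, viewed inside `K`,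
is `{x : K | v(x) < 1}` (multiplicative notation). -/
theorem stmt0 {K : Type*} [Field K] (A : ValuationSubring K) (I : Submodule A K)
    (hfrac : IsFractionalSub A I) (hI0 : I ≠ ⊥) :
    ¬ IsStrictlyDivisorial A I ↔
      ∃ c : K, (I : Set K) = c • {x : K | A.valuation x < 1} :=
  stmt0_general A I hI0
end

section
/- Let V be a valuation domain with quotient field K, let I be a fractional ideal of V and α ∈ K. Then α + I is the set of pseudo-limits of some pseudo-divergent sequence in K if and only if I is not a principal fractional ideal. -/
open scoped Pointwise Classical

universe u

section AuxStmt4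

variable {K : Type u} [Field K] {A : ValuationSubring K} {I : Submodule A K}

lemma auxMemSpanSingleton {x y : K} (hx : x ≠ 0) :
    y ∈ Submodule.span A {x} ↔ A.valuation y ≤ A.valuation x := by
  rw [Submodule.mem_span_singleton]
  constructor
  · rintro ⟨a, rfl⟩
    have : (a : K) • x = (a : K) * x := rfl
    calc A.valuation ((a : K) * x) = A.valuation a * A.valuation x := map_mul _ _ _
      _ ≤ 1 * A.valuation x := by
          exact mul_le_mul_left (A.valuation_le_one a) _
      _ = A.valuation x := one_mul _
  · intro h
    have hmem : y * x⁻¹ ∈ A := by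
      apply A.mem_of_valuation_le_one
      rw [map_mul, map_inv₀]
      calc A.valuation y * (A.valuation x)⁻¹ ≤ A.valuation x * (A.valuation x)⁻¹ :=
            mul_le_mul_left h _
        _ = 1 := by
            rw [mul_inv_cancel₀]
            simpa using hx
    refine ⟨⟨y * x⁻¹, hmem⟩, ?_⟩
    show y * x⁻¹ * x = y
    field_simp

lemma auxMemOfValLe {x y : K} (hx : x ∈ I) (h : A.valuation y ≤ A.valuation x) : y ∈ I := by
  rcases eq_or_ne x 0 with rfl | hx0
  · have : A.valuation y = 0 := le_antisymm (by simpa using h) zero_le'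
    rw [A.valuation.zero_iff] at this
    simpa [this]
  · have := (auxMemSpanSingleton (A := A) hx0).mpr h
    rw [Submodule.mem_span_singleton] at this
    obtain ⟨a, rfl⟩ := this
    exact I.smul_mem a hx

/-- The index type: elements of `I` that strictly dominate in valuation all earlier
(in a fixed well-order of `K`) nonzero elements of `I`. -/
def AuxLam (A : ValuationSubring K) (I : Submodule A K) : Type u :=
  {x : K // (x ∈ I ∧ x ≠ 0) ∧
    ∀ y : K, y ∈ I → y ≠ 0 → embeddingToCardinal y < embeddingToCardinal x →
      A.valuation y < A.valuation x}

noncomputable instance : LinearOrder (AuxLam A I) :=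
  LinearOrder.lift' (fun x => embeddingToCardinal x.1)
    (fun a b h => Subtype.ext (embeddingToCardinal.injective h))

lemma AuxLam.lt_iff {a b : AuxLam A I} :
    a < b ↔ embeddingToCardinal a.1 < embeddingToCardinal b.1 := by
  constructor
  · intro h
    rcases lt_trichotomy (embeddingToCardinal a.1) (embeddingToCardinal b.1) with h' | h' | h'
    · exact h'
    · exact absurd (Subtype.ext (embeddingToCardinal.injective h')) h.ne
    · exact absurd h'.le h.not_ge
  · intro h
    rcases lt_trichotomy a b with h' | h' | h'
    · exact h'
    · exact absurd (h' ▸ h) (lt_irrefl _)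
    · exact absurd h'.le h.not_ge

instance : WellFoundedLT (AuxLam A I) :=
  ⟨Subrelation.wf (fun h => AuxLam.lt_iff.mp h)
    (InvImage.wf (fun x : AuxLam A I => embeddingToCardinal x.1) Cardinal.lt_wf)⟩

lemma AuxLam.val_lt {a b : AuxLam A I} (h : a < b) :
    A.valuation a.1 < A.valuation b.1 :=
  b.2.2 a.1 a.2.1.1 a.2.1.2 (AuxLam.lt_iff.mp h)

lemma AuxLam.val_le {a b : AuxLam A I} (h : a ≤ b) :
    A.valuation a.1 ≤ A.valuation b.1 := by
  rcases h.lt_or_eq with h | rfl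
  · exact (AuxLam.val_lt h).le
  · exact le_rfl

/-- Cofinality: every nonzero element of `I` is dominated by some element of `AuxLam`. -/
lemma AuxLam.cofinal {z : K} (hz : z ∈ I) (hz0 : z ≠ 0) :
    ∃ x : AuxLam A I, A.valuation z ≤ A.valuation x.1 := by
  have wf : WellFounded (fun a b : K => embeddingToCardinal a < embeddingToCardinal b) :=
    InvImage.wf _ Cardinal.lt_wf
  set T : Set K := {x : K | x ∈ I ∧ x ≠ 0 ∧ A.valuation z ≤ A.valuation x} with hT
  have hTne : T.Nonempty := ⟨z, hz, hz0, le_rfl⟩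
  set x := wf.min T hTne with hx
  obtain ⟨hxI, hx0, hxz⟩ : x ∈ T := wf.min_mem T hTne
  refine ⟨⟨x, ⟨hxI, hx0⟩, fun y hyI hy0 hyx => ?_⟩, hxz⟩
  by_contra hle
  push_neg at hle
  exact wf.not_lt_min T (⟨hyI, hy0, hxz.trans hle⟩ : y ∈ T) hyx

/-- If `I` is not principal, `AuxLam` has no maximum. -/
lemma AuxLam.noMax (hnp : ¬ ∃ c : K, I = Submodule.span A {c}) (x : AuxLam A I) :
    ∃ x' : AuxLam A I, x < x' := by
  have hne : I ≠ Submodule.span A {x.1} := fun h => hnp ⟨x.1, h⟩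
  have hsub : Submodule.span A {x.1} ≤ I := by
    rw [Submodule.span_le, Set.singleton_subset_iff]; exact x.2.1.1
  obtain ⟨z, hzI, hznot⟩ := SetLike.exists_of_lt (lt_of_le_of_ne hsub (Ne.symm hne))
  rw [auxMemSpanSingleton x.2.1.2] at hznot
  push_neg at hznot
  have hz0 : z ≠ 0 := by
    rintro rfl
    rw [map_zero] at hznot
    exact absurd hznot (not_lt.mpr zero_le')
  obtain ⟨x', hx'⟩ := AuxLam.cofinal hzI hz0
  have hvlt : A.valuation x.1 < A.valuation x'.1 := lt_of_lt_of_le hznot hx'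
  refine ⟨x', ?_⟩
  rcases lt_trichotomy x x' with h | h | h
  · exact h
  · exact absurd (h ▸ hvlt) (lt_irrefl _)
  · exact absurd (AuxLam.val_lt h) hvlt.asymm

end AuxStmt4

/-- Let `V` be a valuation domain with quotient field `K`, `I` a (nonzero)
fractional ideal of `V` and `α ∈ K`. Then `α + I` is the set of pseudo-limits of some
pseudo-divergent sequence in `K` if and only if `I` is not a principal fractional ideal. -/
theorem stmt4 {K : Type u} [Field K] (A : ValuationSubring K) (I : Submodule A K)
    (hfrac : IsFractionalSub A I) (hI0 : I ≠ ⊥) (α : K) :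
    (∃ (Λ : Type u) (_ : LinearOrder Λ) (_ : WellFoundedLT Λ) (_ : Nonempty Λ) (s : Λ → K),
        (∀ ν : Λ, ∃ ρ : Λ, ν < ρ) ∧ IsPseudoDivergent A.valuation s ∧
        {β : K | IsPseudoLimitPdv A.valuation s β} = (α + ·) '' (I : Set K)) ↔
      ¬ ∃ c : K, I = Submodule.span A {c} := by
  set v := A.valuation with hv
  constructor
  · rintro ⟨Λ, _, _, _, s, hcof, hdiv, hset⟩ ⟨c, hc⟩
    have hc0 : c ≠ 0 := by
      rintro rfl
      rw [Submodule.span_zero_singleton] at hc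
      exact hI0 hc
    have hα : IsPseudoLimitPdv v s α := by
      have : α ∈ {β : K | IsPseudoLimitPdv v s β} := by
        rw [hset]
        exact ⟨0, I.zero_mem, by simp⟩
      exact this
    have hcI : c ∈ I := by rw [hc]; exact Submodule.mem_span_singleton_self c
    have hαc : IsPseudoLimitPdv v s (α + c) := by
      have : α + c ∈ {β : K | IsPseudoLimitPdv v s β} := by
        rw [hset]
        exact ⟨c, hcI, rfl⟩
      exact this
    obtain ⟨N, hN⟩ := hα
    obtain ⟨N', hN'⟩ := hαc
    set M := max N N' with hM
    obtain ⟨ν1, hν1⟩ := hcof M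
    obtain ⟨ν2, hν2⟩ := hcof ν1
    have hNν1 : N ≤ ν1 := le_trans (le_max_left N N') hν1.le
    have hN'ν1 : N' ≤ ν1 := le_trans (le_max_right N N') hν1.le
    have e1 : v (α - s ν1) = v (s M - s ν1) := hN hNν1 hν1
    have e2 : v (α + c - s ν1) = v (s M - s ν1) := hN' hN'ν1 hν1
    have hvc : v c ≤ v (s M - s ν1) := by
      have : c = (α + c - s ν1) - (α - s ν1) := by ring
      calc v c = v ((α + c - s ν1) - (α - s ν1)) := by rw [← this]
        _ ≤ max (v (α + c - s ν1)) (v (α - s ν1)) := v.map_sub _ _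
        _ ≤ v (s M - s ν1) := by rw [e1, e2]; simp
    set d := s ν2 - s ν1 with hd
    have hdval : v (s M - s ν1) < v d := by
      have := hdiv hν1 hν2
      rwa [v.map_sub_swap (s ν1) (s M)] at this
    obtain ⟨ν3, hν3⟩ := hcof ν2
    have hβ : IsPseudoLimitPdv v s (α + d) := by
      refine ⟨ν3, fun μ hμ ρ hρ => ?_⟩
      have hν2μ : ν2 < μ := lt_of_lt_of_le hν3 hμ
      have hμN : N ≤ μ := le_trans hNν1 (le_of_lt (lt_trans hν2 hν2μ))
      have hαμ : v (α - s μ) = v (s ν2 - s μ) := hN hμN hν2μ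
      have hdlt : v d < v (α - s μ) := by
        rw [hαμ, v.map_sub_swap (s ν2) (s μ)]
        exact hdiv hν2 hν2μ
      calc v (α + d - s μ) = v ((α - s μ) + d) := by ring_nf
        _ = v (α - s μ) := v.map_add_eq_of_lt_left hdlt
        _ = v (s ρ - s μ) := hN hμN hρ
    have hmem : α + d ∈ (α + ·) '' (I : Set K) := by rw [← hset]; exact hβ
    obtain ⟨x, hxI, hx⟩ := hmem
    have hdx : x = d := by
      have hx' : α + x = α + d := hx
      exact add_left_cancel hx'
    have hxI' : x ∈ I := hxI
    rw [hc, auxMemSpanSingleton hc0] at hxI'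
    rw [hdx] at hxI'
    exact absurd hxI' (not_le.mpr (lt_of_le_of_lt hvc hdval))
  · intro hnp
    refine ⟨AuxLam A I, inferInstance, inferInstance, ?_, fun ν => α - ν.1, ?_, ?_, ?_⟩
    · obtain ⟨z, hzI, hz0⟩ := Submodule.exists_mem_ne_zero_of_ne_bot hI0
      obtain ⟨x, -⟩ := AuxLam.cofinal hzI hz0
      exact ⟨x⟩
    · exact AuxLam.noMax hnp
    · intro ν ρ σ hνρ hρσ
      have h1 : v ((α - ρ.1) - (α - ν.1)) = v ρ.1 := by
        have : (α - ρ.1) - (α - ν.1) = ν.1 - ρ.1 := by ring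
        rw [this, v.map_sub_eq_of_lt_right (AuxLam.val_lt hνρ)]
      have h2 : v ((α - σ.1) - (α - ρ.1)) = v σ.1 := by
        have : (α - σ.1) - (α - ρ.1) = ρ.1 - σ.1 := by ring
        rw [this, v.map_sub_eq_of_lt_right (AuxLam.val_lt hρσ)]
      rw [h1, h2]
      exact AuxLam.val_lt hρσ
    · ext β
      constructor
      · rintro ⟨N, hN⟩
        obtain ⟨μ, hμ⟩ := AuxLam.noMax hnp N
        have h1 : v (β - (α - μ.1)) = v ((α - N.1) - (α - μ.1)) := hN hμ.le hμ
        have h2 : ((α - N.1) : K) - (α - μ.1) = μ.1 - N.1 := by ring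
        have h3 : v (β - (α - μ.1)) = v μ.1 := by
          rw [h1, h2, v.map_sub_eq_of_lt_left (AuxLam.val_lt hμ)]
        have h4 : v (β - α) ≤ v μ.1 := by
          have : β - α = (β - (α - μ.1)) - μ.1 := by ring
          calc v (β - α) = v ((β - (α - μ.1)) - μ.1) := by rw [← this]
            _ ≤ max (v (β - (α - μ.1))) (v μ.1) := v.map_sub _ _
            _ ≤ v μ.1 := by rw [h3]; simp
        exact ⟨β - α, auxMemOfValLe μ.2.1.1 h4, by ring⟩
      · rintro ⟨x, hxI, rfl⟩
        rcases eq_or_ne x 0 with rfl | hx0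
        · obtain ⟨z, hzI, hz0⟩ := Submodule.exists_mem_ne_zero_of_ne_bot hI0
          obtain ⟨ν0, -⟩ := AuxLam.cofinal hzI hz0
          refine ⟨ν0, fun ν _ ρ hρν => ?_⟩
          have h1 : (α + 0 : K) - (α - ν.1) = ν.1 := by ring
          have h2 : ((α - ρ.1) : K) - (α - ν.1) = ν.1 - ρ.1 := by ring
          rw [h1, h2, v.map_sub_eq_of_lt_left (AuxLam.val_lt hρν)]
        · obtain ⟨ν0, hν0⟩ := AuxLam.cofinal hxI hx0
          obtain ⟨ν1, hν1⟩ := AuxLam.noMax hnp ν0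
          refine ⟨ν1, fun ν hν ρ hρν => ?_⟩
          have hxν : v x < v ν.1 :=
            lt_of_le_of_lt hν0 (lt_of_lt_of_le (AuxLam.val_lt hν1) (AuxLam.val_le hν))
          have h1 : (α + x : K) - (α - ν.1) = x + ν.1 := by ring
          have h2 : ((α - ρ.1) : K) - (α - ν.1) = ν.1 - ρ.1 := by ring
          rw [h1, h2, v.map_add_eq_of_lt_right hxν,
            v.map_sub_eq_of_lt_left (AuxLam.val_lt hρν)]
end

section
/- Let V be a valuation domain with quotient field K, and let E = {s_ν}_{ν∈Λ} be a pseudo-monotone sequence in K. Then the set V_E = {φ ∈ K(X) : φ(s_ν) ∈ V for all sufficiently large ν} is a valuation domain of K(X) extending V, with maximal ideal M_E = {φ ∈ K(X) : φ(s_ν) ∈ M for all sufficiently large ν}. -/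
open scoped Pointwise Classical

section PM
section Ext

universe uK
variable {K : Type uK} [Field K] {Γ : Type*} [LinearOrderedCommGroupWithZero Γ]

/-- Any valuation on `K` is "compatible" with some valuation on the algebraic closure. -/
theorem exists_ext (v : Valuation K Γ) :
    ∃ (Γ' : Type uK) (_ : LinearOrderedCommGroupWithZero Γ')
      (w : Valuation (AlgebraicClosure K) Γ'),
      ∀ x y : K, v x ≤ v y ↔
        w (algebraMap K (AlgebraicClosure K) x) ≤ w (algebraMap K (AlgebraicClosure K) y) := by
  set L := AlgebraicClosure K
  set O := v.valuationSubring
  set f : O →+* L := (algebraMap K L).comp O.subtype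
  obtain ⟨A, hA, hloc⟩ := IsLocalRing.exists_factor_valuationRing f
  set ι := algebraMap K L
  set w := A.valuation
  have key : ∀ z : K, v z ≤ 1 ↔ w (ι z) ≤ 1 := by
    intro z
    constructor
    · intro hz
      exact (A.valuation_le_one_iff _).2 (hA ⟨z, hz⟩)
    · intro hw
      by_contra hv
      push_neg at hv
      have hz0 : z ≠ 0 := by
        rintro rfl
        rw [map_zero] at hv
        exact absurd hv (not_lt.2 zero_le')
      have hy1 : v z⁻¹ < 1 := by
        rw [map_inv₀]
        exact (inv_lt_one₀ (zero_lt_one.trans hv)).2 hv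
      set Y : O := ⟨z⁻¹, le_of_lt hy1⟩
      have hgY : IsUnit ((f.codRestrict A.toSubring hA) Y) := by
        refine IsUnit.of_mul_eq_one ⟨ι z, A.mem_of_valuation_le_one _ hw⟩ ?_
        ext
        show ι z⁻¹ * ι z = 1
        rw [← map_mul, inv_mul_cancel₀ hz0, map_one]
      have hY : IsUnit Y := hloc.1 _ hgY
      obtain ⟨Z, hZ⟩ := isUnit_iff_exists_inv.1 hY
      have hZK : (Y : K) * (Z : K) = 1 := by exact_mod_cast congrArg (Subtype.val) hZ
      have : (1 : Γ) ≤ v z⁻¹ := by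
        calc (1:Γ) = v ((Y : K) * (Z : K)) := by rw [hZK, map_one]
        _ = v z⁻¹ * v (Z : K) := by rw [map_mul]
        _ ≤ v z⁻¹ * 1 := mul_le_mul_right Z.2 _
        _ = v z⁻¹ := mul_one _
      exact absurd this (not_le.2 hy1)
  refine ⟨A.ValueGroup, inferInstance, w, fun x y => ?_⟩
  rcases eq_or_ne y 0 with rfl | hy
  · simp only [map_zero, le_zero_iff]
    rw [Valuation.zero_iff, Valuation.zero_iff, map_eq_zero]
  · have hvy : v y ≠ 0 := by rwa [Valuation.ne_zero_iff]
    have hwy : w (ι y) ≠ 0 := by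
      rw [Valuation.ne_zero_iff]; exact fun h => hy (by simpa using (map_eq_zero ι).1 h)
    rw [show v x ≤ v y ↔ v (x / y) ≤ 1 by
          rw [map_div₀, div_le_one₀ (zero_lt_iff.2 hvy)],
        show w (ι x) ≤ w (ι y) ↔ w (ι (x / y)) ≤ 1 by
          rw [map_div₀, map_div₀, div_le_one₀ (zero_lt_iff.2 hwy)]]
    exact key _

end Ext

section Gauge

variable {L : Type*} [Field L] {Γ' : Type*} [LinearOrderedCommGroupWithZero Γ']
variable {Λ : Type*} [LinearOrder Λ] [Nonempty Λ]

theorem tri_aux (hnomax : ∀ ν : Λ, ∃ ρ : Λ, ν < ρ) (u : Λ → Γ') (c : Γ')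
    (hu : (∃ N₀ : Λ, ∀ ⦃ν ρ : Λ⦄, N₀ ≤ ν → ν < ρ → u ρ < u ν) ∨
      (∃ N₀ : Λ, ∀ ⦃ν ρ : Λ⦄, N₀ ≤ ν → ν < ρ → u ν < u ρ) ∨
      (∃ d : Γ', ∃ N₀ : Λ, ∀ ν, N₀ ≤ ν → u ν = d)) :
    (∃ N, ∀ ν, N ≤ ν → u ν < c) ∨ (∃ N, ∀ ν, N ≤ ν → u ν = c) ∨
      (∃ N, ∀ ν, N ≤ ν → c < u ν) := by
  rcases hu with ⟨N₀, h⟩ | ⟨N₀, h⟩ | ⟨d, N₀, h⟩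
  · by_cases hex : ∃ ν₀, N₀ ≤ ν₀ ∧ u ν₀ ≤ c
    · obtain ⟨ν₀, hν₀, hu₀⟩ := hex
      obtain ⟨ρ₀, hρ₀⟩ := hnomax ν₀
      exact Or.inl ⟨ρ₀, fun ν hν => lt_of_lt_of_le (h hν₀ (lt_of_lt_of_le hρ₀ hν)) hu₀⟩
    · push_neg at hex
      exact Or.inr (Or.inr ⟨N₀, fun ν hν => hex ν hν⟩)
  · by_cases hex : ∃ ν₀, N₀ ≤ ν₀ ∧ c ≤ u ν₀
    · obtain ⟨ν₀, hν₀, hu₀⟩ := hex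
      obtain ⟨ρ₀, hρ₀⟩ := hnomax ν₀
      exact Or.inr (Or.inr ⟨ρ₀, fun ν hν => lt_of_le_of_lt hu₀ (h hν₀ (lt_of_lt_of_le hρ₀ hν))⟩)
    · push_neg at hex
      exact Or.inl ⟨N₀, fun ν hν => hex ν hν⟩
  · rcases lt_trichotomy d c with h1 | h1 | h1
    · exact Or.inl ⟨N₀, fun ν hν => (h ν hν).symm ▸ h1⟩
    · exact Or.inr (Or.inl ⟨N₀, fun ν hν => (h ν hν).trans h1⟩)
    · exact Or.inr (Or.inr ⟨N₀, fun ν hν => (h ν hν).symm ▸ h1⟩)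

theorem exists_gauge [WellFoundedLT Λ] (hnomax : ∀ ν : Λ, ∃ ρ : Λ, ν < ρ)
    (w : Valuation L Γ') (t : Λ → L) (hE : IsPseudoMonotone w t) :
    ∃ δ : Λ → Γ',
      ((∃ N₀ : Λ, ∀ ⦃ν ρ : Λ⦄, N₀ ≤ ν → ν < ρ → δ ρ < δ ν) ∨
        (∃ N₀ : Λ, ∀ ⦃ν ρ : Λ⦄, N₀ ≤ ν → ν < ρ → δ ν < δ ρ) ∨
        (∃ d : Γ', ∃ N₀ : Λ, ∀ ν, N₀ ≤ ν → δ ν = d)) ∧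
      (∃ N₀, ∀ ν, N₀ ≤ ν → δ ν ≠ 0) ∧
      (∀ α : L, (∃ N, ∀ ν, N ≤ ν → w (t ν - α) = δ ν) ∨
        (∃ c, c ≠ 0 ∧ ∃ N, ∀ ν, N ≤ ν → w (t ν - α) = c)) := by
  have hnxt : ∀ ν : Λ, ν < (hnomax ν).choose := fun ν => (hnomax ν).choose_spec
  set nxt : Λ → Λ := fun ν => (hnomax ν).choose with hnxtdef
  obtain ⟨Nst⟩ := ‹Nonempty Λ›
  rcases hE with hc | hd | hst
  · -- pseudo-convergent
    set δ : Λ → Γ' := fun ν => w (t (nxt ν) - t ν) with hδ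
    have d1 : ∀ ⦃ν ρ : Λ⦄, ν < ρ → w (t ρ - t ν) = δ ν := by
      intro ν ρ h
      rcases lt_trichotomy ρ (nxt ν) with h1 | h1 | h1
      · have h2 := hc h h1
        have : t (nxt ν) - t ν = (t (nxt ν) - t ρ) + (t ρ - t ν) := by ring
        rw [hδ]; dsimp only; rw [this, w.map_add_eq_of_lt_right h2]
      · rw [h1]
      · have h2 := hc (hnxt ν) h1
        have : t ρ - t ν = (t ρ - t (nxt ν)) + (t (nxt ν) - t ν) := by ring
        rw [this, w.map_add_eq_of_lt_right h2]
    have nz : ∀ ν, δ ν ≠ 0 := by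
      intro ν
      have h2 := hc (hnxt ν) (hnxt (nxt ν))
      rw [d1 (hnxt ν)] at h2
      exact (zero_le'.trans_lt h2).ne'
    refine ⟨δ, Or.inl ⟨Nst, fun ν ρ _ h => ?_⟩, ⟨Nst, fun ν _ => nz ν⟩, fun α => ?_⟩
    · have h2 := hc h (hnxt ρ)
      rwa [d1 h] at h2
    · by_cases hex : ∃ ν₀, w (t ν₀ - α) ≠ δ ν₀
      · obtain ⟨ν₀, hne⟩ := hex
        refine Or.inr ⟨max (δ ν₀) (w (t ν₀ - α)), ?_, nxt ν₀, fun ν hν => ?_⟩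
        · exact fun h => nz ν₀ (le_zero_iff.1 (h ▸ le_max_left _ _))
        · have hν0 : ν₀ < ν := lt_of_lt_of_le (hnxt ν₀) hν
          have hsplit : t ν - α = (t ν - t ν₀) + (t ν₀ - α) := by ring
          rw [hsplit, w.map_add_of_distinct_val (by rw [d1 hν0]; exact fun h => hne h.symm),
            d1 hν0]
      · push_neg at hex
        exact Or.inl ⟨Nst, fun ν _ => hex ν⟩
  · -- pseudo-divergent
    obtain ⟨b, _, hbmin⟩ := (IsWellFounded.wf (r := ((· < ·) : Λ → Λ → Prop))).has_min
      Set.univ ⟨Nst, trivial⟩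
    have hb : ∀ x : Λ, b ≤ x := fun x => not_lt.1 (hbmin x trivial)
    obtain ⟨N₁, hN₁⟩ := hnomax b
    set δ : Λ → Γ' := fun ν => w (t ν - t b) with hδ
    have d1 : ∀ ⦃ν ρ : Λ⦄, ρ < ν → w (t ν - t ρ) = δ ν := by
      intro ν ρ h
      rcases (hb ρ).eq_or_lt with h1 | h1
      · rw [← h1]
      · have h2 := hd h1 h
        have : t ν - t b = (t ν - t ρ) + (t ρ - t b) := by ring
        rw [hδ]; dsimp only; rw [this, w.map_add_eq_of_lt_left h2]
    have mono : ∀ ⦃ν ρ : Λ⦄, N₁ ≤ ν → ν < ρ → δ ν < δ ρ := by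
      intro ν ρ hν h
      have h2 := hd (lt_of_lt_of_le hN₁ hν) h
      rwa [d1 h] at h2
    have nz : ∃ N₀, ∀ ν, N₀ ≤ ν → δ ν ≠ 0 := by
      by_cases hz : ∃ ν₁, N₁ ≤ ν₁ ∧ δ ν₁ = 0
      · obtain ⟨ν₁, hν₁, h0⟩ := hz
        refine ⟨nxt ν₁, fun ν hν => ?_⟩
        have := mono hν₁ (lt_of_lt_of_le (hnxt ν₁) hν)
        rw [h0] at this
        exact this.ne'
      · push_neg at hz
        exact ⟨N₁, fun ν hν => hz ν hν⟩
    refine ⟨δ, Or.inr (Or.inl ⟨N₁, mono⟩), nz, fun α => ?_⟩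
    by_cases hex : ∃ ν₁, N₁ < ν₁ ∧ w (t N₁ - α) ≤ δ ν₁
    · obtain ⟨ν₁, hν₁, hu⟩ := hex
      refine Or.inl ⟨nxt ν₁, fun ν hν => ?_⟩
      have hν1 : ν₁ < ν := lt_of_lt_of_le (hnxt ν₁) hν
      have hlt : w (t N₁ - α) < δ ν := lt_of_le_of_lt hu (mono hν₁.le hν1)
      have hsplit : t ν - α = (t ν - t N₁) + (t N₁ - α) := by ring
      have hdν : w (t ν - t N₁) = δ ν := d1 (hν₁.trans hν1)
      rw [hsplit, w.map_add_eq_of_lt_left (by rw [hdν]; exact hlt), hdν]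
    · push_neg at hex
      have hc0 : (0 : Γ') < w (t N₁ - α) := by
        obtain ⟨ρ, hρ⟩ := hnomax N₁
        exact zero_le'.trans_lt (hex ρ hρ)
      refine Or.inr ⟨w (t N₁ - α), hc0.ne', nxt N₁, fun ν hν => ?_⟩
      have hν1 : N₁ < ν := lt_of_lt_of_le (hnxt N₁) hν
      have hsplit : t ν - α = (t ν - t N₁) + (t N₁ - α) := by ring
      rw [hsplit, w.map_add_eq_of_lt_right (by rw [d1 hν1]; exact hex ν hν1)]
  · -- pseudo-stationary
    obtain ⟨hstd, hstv⟩ := hst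
    have hab : Nst ≠ nxt Nst := (hnxt Nst).ne
    set c₀ : Γ' := w (t Nst - t (nxt Nst)) with hc₀def
    have hc₀ : c₀ ≠ 0 := by
      rw [hc₀def, Valuation.ne_zero_iff]
      exact sub_ne_zero.2 (hstd hab)
    refine ⟨fun _ => c₀, Or.inr (Or.inr ⟨c₀, Nst, fun _ _ => rfl⟩),
      ⟨Nst, fun _ _ => hc₀⟩, fun α => ?_⟩
    by_cases hex : ∃ μ₀, w (t μ₀ - α) ≠ c₀
    · obtain ⟨μ₀, hne⟩ := hex
      refine Or.inr ⟨max c₀ (w (t μ₀ - α)), ?_, nxt μ₀, fun ν hν => ?_⟩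
      · exact fun h => hc₀ (le_zero_iff.1 (h ▸ le_max_left _ _))
      · have hν0 : μ₀ < ν := lt_of_lt_of_le (hnxt μ₀) hν
        have hsplit : t ν - α = (t ν - t μ₀) + (t μ₀ - α) := by ring
        have hval : w (t ν - t μ₀) = c₀ := hstv hν0.ne' hab
        rw [hsplit, w.map_add_of_distinct_val (by rw [hval]; exact fun h => hne h.symm), hval]
    · push_neg at hex
      exact Or.inr ⟨c₀, hc₀, Nst, fun ν _ => hex ν⟩

end Gauge

section Core

variable {L : Type*} [Field L] [IsAlgClosed L] {Γ' : Type*} [LinearOrderedCommGroupWithZero Γ']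
variable {Λ : Type*} [LinearOrder Λ] [Nonempty Λ]

theorem prod_formula (w : Valuation L Γ') (t : Λ → L) (δ : Λ → Γ')
    (hroot : ∀ α : L, (∃ N, ∀ ν, N ≤ ν → w (t ν - α) = δ ν) ∨
      (∃ c, c ≠ 0 ∧ ∃ N, ∀ ν, N ≤ ν → w (t ν - α) = c))
    (F : Polynomial L) (hF : F ≠ 0) :
    ∃ (m : ℕ) (c : Γ'), c ≠ 0 ∧ ∃ N, ∀ ν, N ≤ ν → w (F.eval (t ν)) = c * δ ν ^ m := by
  have helper : ∀ R : Multiset L, ∃ (m : ℕ) (c : Γ'), c ≠ 0 ∧ ∃ N, ∀ ν, N ≤ ν →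
      (R.map fun r => w (t ν - r)).prod = c * δ ν ^ m := by
    intro R
    induction R using Multiset.induction_on with
    | empty => exact ⟨0, 1, one_ne_zero, Classical.arbitrary Λ, by simp⟩
    | cons r R ih =>
      obtain ⟨m, c, hc, N, hN⟩ := ih
      rcases hroot r with ⟨N', hN'⟩ | ⟨c', hc', N', hN'⟩
      · refine ⟨m + 1, c, hc, max N N', fun ν hν => ?_⟩
        rw [Multiset.map_cons, Multiset.prod_cons, hN ν (le_trans (le_max_left _ _) hν),
          hN' ν (le_trans (le_max_right _ _) hν), pow_succ]
        rw [mul_comm (δ ν) (c * δ ν ^ m), mul_assoc]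
      · refine ⟨m, c' * c, mul_ne_zero hc' hc, max N N', fun ν hν => ?_⟩
        rw [Multiset.map_cons, Multiset.prod_cons, hN ν (le_trans (le_max_left _ _) hν),
          hN' ν (le_trans (le_max_right _ _) hν), ← mul_assoc]
  have hsplit := (IsAlgClosed.splits F).eq_prod_roots
  obtain ⟨m, c, hc, N, hN⟩ := helper F.roots
  have hlc : w F.leadingCoeff ≠ 0 := by
    rw [Valuation.ne_zero_iff]
    exact Polynomial.leadingCoeff_ne_zero.2 hF
  refine ⟨m, w F.leadingCoeff * c, mul_ne_zero hlc hc, N, fun ν hν => ?_⟩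
  conv_lhs => rw [hsplit]
  rw [Polynomial.eval_mul, Polynomial.eval_C, map_mul, Polynomial.eval_multiset_prod,
    Multiset.map_map, map_multiset_prod, Multiset.map_map]
  simp only [Function.comp_def, Polynomial.eval_sub, Polynomial.eval_X, Polynomial.eval_C]
  rw [hN ν hν, mul_assoc]

theorem pair_tri (hnomax : ∀ ν : Λ, ∃ ρ : Λ, ν < ρ) (δ : Λ → Γ')
    (hshape : (∃ N₀ : Λ, ∀ ⦃ν ρ : Λ⦄, N₀ ≤ ν → ν < ρ → δ ρ < δ ν) ∨
      (∃ N₀ : Λ, ∀ ⦃ν ρ : Λ⦄, N₀ ≤ ν → ν < ρ → δ ν < δ ρ) ∨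
      (∃ d : Γ', ∃ N₀ : Λ, ∀ ν, N₀ ≤ ν → δ ν = d))
    (hnz : ∃ N₀, ∀ ν, N₀ ≤ ν → δ ν ≠ 0)
    (a b : ℕ) (c d : Γ') (hc : c ≠ 0) (hd : d ≠ 0) :
    (∃ N, ∀ ν, N ≤ ν → c * δ ν ^ a < d * δ ν ^ b) ∨
      (∃ N, ∀ ν, N ≤ ν → c * δ ν ^ a = d * δ ν ^ b) ∨
      (∃ N, ∀ ν, N ≤ ν → d * δ ν ^ b < c * δ ν ^ a) := by
  obtain ⟨Nz, hNz⟩ := hnz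
  have main : ∀ (a b : ℕ) (c d : Γ'), c ≠ 0 → d ≠ 0 → a ≤ b →
      (∃ N, ∀ ν, N ≤ ν → c * δ ν ^ a < d * δ ν ^ b) ∨
      (∃ N, ∀ ν, N ≤ ν → c * δ ν ^ a = d * δ ν ^ b) ∨
      (∃ N, ∀ ν, N ≤ ν → d * δ ν ^ b < c * δ ν ^ a) := by
    intro a b c d hc hd hab
    set k := b - a with hk
    set u : Λ → Γ' := fun ν => d * δ ν ^ k with hu
    have hbu : ∀ ν, Nz ≤ ν → d * δ ν ^ b = u ν * δ ν ^ a := by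
      intro ν hν
      rw [hu]
      dsimp only
      rw [show b = a + k from (Nat.add_sub_cancel' hab).symm, pow_add,
        mul_comm (δ ν ^ a) (δ ν ^ k), ← mul_assoc]
    have hushape : (∃ N₀ : Λ, ∀ ⦃ν ρ : Λ⦄, N₀ ≤ ν → ν < ρ → u ρ < u ν) ∨
        (∃ N₀ : Λ, ∀ ⦃ν ρ : Λ⦄, N₀ ≤ ν → ν < ρ → u ν < u ρ) ∨
        (∃ e : Γ', ∃ N₀ : Λ, ∀ ν, N₀ ≤ ν → u ν = e) := by
      rcases Nat.eq_zero_or_pos k with hk0 | hk0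
      · exact Or.inr (Or.inr ⟨d, Classical.arbitrary Λ, fun ν _ => by
          rw [hu]; dsimp only; rw [hk0, pow_zero, mul_one]⟩)
      rcases hshape with ⟨N₀, h⟩ | ⟨N₀, h⟩ | ⟨e, N₀, h⟩
      · refine Or.inl ⟨max N₀ Nz, fun ν ρ hν hρ => ?_⟩
        have h1 := pow_lt_pow_left₀ (h (le_trans (le_max_left _ _) hν) hρ) zero_le' hk0.ne'
        exact (mul_lt_mul_iff_right₀ (zero_lt_iff.2 hd)).2 h1
      · refine Or.inr (Or.inl ⟨max N₀ Nz, fun ν ρ hν hρ => ?_⟩)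
        have h1 := pow_lt_pow_left₀ (h (le_trans (le_max_left _ _) hν) hρ) zero_le' hk0.ne'
        exact (mul_lt_mul_iff_right₀ (zero_lt_iff.2 hd)).2 h1
      · exact Or.inr (Or.inr ⟨d * e ^ k, N₀, fun ν hν => by
          rw [hu]; dsimp only; rw [h ν hν]⟩)
    rcases tri_aux hnomax u c hushape with ⟨N, hN⟩ | ⟨N, hN⟩ | ⟨N, hN⟩
    · refine Or.inr (Or.inr ⟨max N Nz, fun ν hν => ?_⟩)
      have hδ := hNz ν (le_trans (le_max_right _ _) hν)
      rw [hbu ν (le_trans (le_max_right _ _) hν)]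
      exact (mul_lt_mul_iff_left₀ (pow_pos (zero_lt_iff.2 hδ) a)).2 (hN ν (le_trans (le_max_left _ _) hν))
    · refine Or.inr (Or.inl ⟨max N Nz, fun ν hν => ?_⟩)
      rw [hbu ν (le_trans (le_max_right _ _) hν), hN ν (le_trans (le_max_left _ _) hν)]
    · refine Or.inl ⟨max N Nz, fun ν hν => ?_⟩
      have hδ := hNz ν (le_trans (le_max_right _ _) hν)
      rw [hbu ν (le_trans (le_max_right _ _) hν)]
      exact (mul_lt_mul_iff_left₀ (pow_pos (zero_lt_iff.2 hδ) a)).2 (hN ν (le_trans (le_max_left _ _) hν))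
  rcases le_total a b with hab | hab
  · exact main a b c d hc hd hab
  · rcases main b a d c hd hc hab with h | h | h
    · exact Or.inr (Or.inr h)
    · exact Or.inr (Or.inl (by obtain ⟨N, hN⟩ := h; exact ⟨N, fun ν hν => (hN ν hν).symm⟩))
    · exact Or.inl h

theorem core_tri (hnomax : ∀ ν : Λ, ∃ ρ : Λ, ν < ρ)
    (w : Valuation L Γ') (t : Λ → L) (δ : Λ → Γ')
    (hshape : (∃ N₀ : Λ, ∀ ⦃ν ρ : Λ⦄, N₀ ≤ ν → ν < ρ → δ ρ < δ ν) ∨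
      (∃ N₀ : Λ, ∀ ⦃ν ρ : Λ⦄, N₀ ≤ ν → ν < ρ → δ ν < δ ρ) ∨
      (∃ d : Γ', ∃ N₀ : Λ, ∀ ν, N₀ ≤ ν → δ ν = d))
    (hnz : ∃ N₀, ∀ ν, N₀ ≤ ν → δ ν ≠ 0)
    (hroot : ∀ α : L, (∃ N, ∀ ν, N ≤ ν → w (t ν - α) = δ ν) ∨
      (∃ c, c ≠ 0 ∧ ∃ N, ∀ ν, N ≤ ν → w (t ν - α) = c))
    (F G : Polynomial L) (hF : F ≠ 0) (hG : G ≠ 0) :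
    (∃ N, ∀ ν, N ≤ ν → w (F.eval (t ν)) < w (G.eval (t ν))) ∨
      (∃ N, ∀ ν, N ≤ ν → w (F.eval (t ν)) = w (G.eval (t ν))) ∨
      (∃ N, ∀ ν, N ≤ ν → w (G.eval (t ν)) < w (F.eval (t ν))) := by
  obtain ⟨a, c, hc, Nf, hf⟩ := prod_formula w t δ hroot F hF
  obtain ⟨b, d, hd, Ng, hg⟩ := prod_formula w t δ hroot G hG
  have conv : ∀ N, ∃ N', ∀ ν, N' ≤ ν → N ≤ ν ∧ Nf ≤ ν ∧ Ng ≤ ν := by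
    intro N
    exact ⟨max N (max Nf Ng), fun ν hν =>
      ⟨le_trans (le_max_left _ _) hν,
       le_trans (le_trans (le_max_left _ _) (le_max_right _ _)) hν,
       le_trans (le_trans (le_max_right _ _) (le_max_right _ _)) hν⟩⟩
  rcases pair_tri hnomax δ hshape hnz a b c d hc hd with ⟨N, hN⟩ | ⟨N, hN⟩ | ⟨N, hN⟩
  · obtain ⟨N', hN'⟩ := conv N
    exact Or.inl ⟨N', fun ν hν => by
      obtain ⟨h1, h2, h3⟩ := hN' ν hν
      rw [hf ν h2, hg ν h3]; exact hN ν h1⟩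
  · obtain ⟨N', hN'⟩ := conv N
    exact Or.inr (Or.inl ⟨N', fun ν hν => by
      obtain ⟨h1, h2, h3⟩ := hN' ν hν
      rw [hf ν h2, hg ν h3]; exact hN ν h1⟩)
  · obtain ⟨N', hN'⟩ := conv N
    exact Or.inr (Or.inr ⟨N', fun ν hν => by
      obtain ⟨h1, h2, h3⟩ := hN' ν hν
      rw [hf ν h2, hg ν h3]; exact hN ν h1⟩)

theorem core_nz (w : Valuation L Γ') (t : Λ → L) (δ : Λ → Γ')
    (hnz : ∃ N₀, ∀ ν, N₀ ≤ ν → δ ν ≠ 0)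
    (hroot : ∀ α : L, (∃ N, ∀ ν, N ≤ ν → w (t ν - α) = δ ν) ∨
      (∃ c, c ≠ 0 ∧ ∃ N, ∀ ν, N ≤ ν → w (t ν - α) = c))
    (F : Polynomial L) (hF : F ≠ 0) :
    ∃ N, ∀ ν, N ≤ ν → F.eval (t ν) ≠ 0 := by
  obtain ⟨m, c, hc, N, hN⟩ := prod_formula w t δ hroot F hF
  obtain ⟨Nz, hNz⟩ := hnz
  refine ⟨max N Nz, fun ν hν => ?_⟩
  have h1 := hN ν (le_trans (le_max_left _ _) hν)
  have h2 := hNz ν (le_trans (le_max_right _ _) hν)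
  intro h0
  rw [h0, map_zero] at h1
  exact mul_ne_zero hc (pow_ne_zero m h2) h1.symm

end Core

section Assemble

variable {K : Type*} [Field K] {Γ : Type*} [LinearOrderedCommGroupWithZero Γ]
variable {Λ : Type*} [LinearOrder Λ] [Nonempty Λ]

theorem assemble (v : Valuation K Γ) (hnomax : ∀ ν : Λ, ∃ ρ : Λ, ν < ρ) (s : Λ → K)
    (VNONZ : ∀ f : Polynomial K, f ≠ 0 → ∃ N, ∀ ν, N ≤ ν → f.eval (s ν) ≠ 0)
    (VTRI : ∀ f g : Polynomial K, f ≠ 0 → g ≠ 0 →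
      (∃ N, ∀ ν, N ≤ ν → v (f.eval (s ν)) < v (g.eval (s ν))) ∨
      (∃ N, ∀ ν, N ≤ ν → v (f.eval (s ν)) = v (g.eval (s ν))) ∨
      (∃ N, ∀ ν, N ≤ ν → v (g.eval (s ν)) < v (f.eval (s ν)))) :
    ∃ W : ValuationSubring (RatFunc K),
      (W : Set (RatFunc K)) = VESet v s ∧
      (∀ a : K, RatFunc.C a ∈ W ↔ v a ≤ 1) ∧
      ∀ φ : W, φ ∈ IsLocalRing.maximalIdeal W ↔
        ∃ N : Λ, ∀ ⦃ν : Λ⦄, N ≤ ν →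
          v (RatFunc.eval (RingHom.id K) (s ν) (φ : RatFunc K)) < 1 := by
  set ev : Λ → RatFunc K → K := fun ν φ => RatFunc.eval (RingHom.id K) (s ν) φ with hev
  -- eventual nonvanishing of denominators
  have hden : ∀ φ : RatFunc K, ∃ N, ∀ ν, N ≤ ν →
      Polynomial.eval₂ (RingHom.id K) (s ν) φ.denom ≠ 0 := by
    intro φ
    obtain ⟨N, hN⟩ := VNONZ φ.denom (RatFunc.denom_ne_zero φ)
    exact ⟨N, fun ν hν => hN ν hν⟩
  -- eval is eventually additive/multiplicative
  have hevadd : ∀ φ ψ : RatFunc K, ∃ N, ∀ ν, N ≤ ν →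
      ev ν (φ + ψ) = ev ν φ + ev ν ψ := by
    intro φ ψ
    obtain ⟨N1, h1⟩ := hden φ
    obtain ⟨N2, h2⟩ := hden ψ
    refine ⟨max N1 N2, fun ν hν => ?_⟩
    show RatFunc.eval (RingHom.id K) (s ν) (φ + ψ) = _
    exact RatFunc.eval_add (f := RingHom.id K) (a := s ν) (h1 ν (le_trans (le_max_left _ _) hν))
      (h2 ν (le_trans (le_max_right _ _) hν))
  have hevmul : ∀ φ ψ : RatFunc K, ∃ N, ∀ ν, N ≤ ν →
      ev ν (φ * ψ) = ev ν φ * ev ν ψ := by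
    intro φ ψ
    obtain ⟨N1, h1⟩ := hden φ
    obtain ⟨N2, h2⟩ := hden ψ
    refine ⟨max N1 N2, fun ν hν => ?_⟩
    show RatFunc.eval (RingHom.id K) (s ν) (φ * ψ) = _
    exact RatFunc.eval_mul (f := RingHom.id K) (a := s ν) (h1 ν (le_trans (le_max_left _ _) hν))
      (h2 ν (le_trans (le_max_right _ _) hν))
  -- trichotomy of v (ev ν φ) against 1
  have TRI1 : ∀ φ : RatFunc K, φ ≠ 0 →
      (∃ N, ∀ ν, N ≤ ν → v (ev ν φ) < 1) ∨ (∃ N, ∀ ν, N ≤ ν → v (ev ν φ) = 1) ∨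
        (∃ N, ∀ ν, N ≤ ν → 1 < v (ev ν φ)) := by
    intro φ hφ
    obtain ⟨Nd, hNd⟩ := VNONZ φ.denom (RatFunc.denom_ne_zero φ)
    have hevform : ∀ ν, ev ν φ = φ.num.eval (s ν) / φ.denom.eval (s ν) := fun ν => rfl
    have key : ∀ ν, Nd ≤ ν → v (ev ν φ) = v (φ.num.eval (s ν)) / v (φ.denom.eval (s ν)) := by
      intro ν hν
      rw [hevform, map_div₀]
    have hdpos : ∀ ν, Nd ≤ ν → (0 : Γ) < v (φ.denom.eval (s ν)) :=
      fun ν hν => zero_lt_iff.2 ((Valuation.ne_zero_iff v).2 (hNd ν hν))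
    rcases VTRI φ.num φ.denom (RatFunc.num_ne_zero hφ) (RatFunc.denom_ne_zero φ)
      with ⟨N, hN⟩ | ⟨N, hN⟩ | ⟨N, hN⟩
    · refine Or.inl ⟨max N Nd, fun ν hν => ?_⟩
      have hd := hdpos ν (le_trans (le_max_right _ _) hν)
      rw [key ν (le_trans (le_max_right _ _) hν), div_lt_iff₀ hd, one_mul]
      exact hN ν (le_trans (le_max_left _ _) hν)
    · refine Or.inr (Or.inl ⟨max N Nd, fun ν hν => ?_⟩)
      have hd := hdpos ν (le_trans (le_max_right _ _) hν)
      rw [key ν (le_trans (le_max_right _ _) hν), hN ν (le_trans (le_max_left _ _) hν),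
        div_self hd.ne']
    · refine Or.inr (Or.inr ⟨max N Nd, fun ν hν => ?_⟩)
      have hd := hdpos ν (le_trans (le_max_right _ _) hν)
      rw [key ν (le_trans (le_max_right _ _) hν), lt_div_iff₀ hd, one_mul]
      exact hN ν (le_trans (le_max_left _ _) hν)
  -- inverses
  have INV : ∀ φ : RatFunc K, φ ≠ 0 → ∃ N, ∀ ν, N ≤ ν →
      v (ev ν φ⁻¹) * v (ev ν φ) = 1 := by
    intro φ hφ
    obtain ⟨N, hN⟩ := hevmul φ⁻¹ φ
    refine ⟨N, fun ν hν => ?_⟩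
    have := hN ν hν
    rw [inv_mul_cancel₀ hφ] at this
    have h1 : ev ν (1 : RatFunc K) = 1 := RatFunc.eval_one _ _
    rw [h1] at this
    rw [← map_mul, ← this, map_one]
  -- the subring
  have zeromem : (0 : RatFunc K) ∈ VESet v s := by
    refine ⟨Classical.arbitrary Λ, fun ν _ => ?_⟩
    show v (ev ν 0) ≤ 1
    rw [show ev ν (0 : RatFunc K) = 0 from RatFunc.eval_zero _ _, map_zero]
    exact zero_le'
  let Wsub : Subring (RatFunc K) :=
    { carrier := VESet v s
      zero_mem' := zeromem
      one_mem' := ⟨Classical.arbitrary Λ, fun ν _ => by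
        show v (ev ν 1) ≤ 1
        rw [show ev ν (1 : RatFunc K) = 1 from RatFunc.eval_one _ _, map_one]⟩
      add_mem' := by
        rintro φ ψ ⟨N1, h1⟩ ⟨N2, h2⟩
        obtain ⟨N3, h3⟩ := hevadd φ ψ
        refine ⟨max N1 (max N2 N3), fun ν hν => ?_⟩
        have e3 := h3 ν (le_trans (le_trans (le_max_right _ _) (le_max_right _ _)) hν)
        show v (ev ν (φ + ψ)) ≤ 1
        rw [e3]
        exact v.map_add_le (h1 (le_trans (le_max_left _ _) hν))
          (h2 (le_trans (le_trans (le_max_left _ _) (le_max_right _ _)) hν))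
      mul_mem' := by
        rintro φ ψ ⟨N1, h1⟩ ⟨N2, h2⟩
        obtain ⟨N3, h3⟩ := hevmul φ ψ
        refine ⟨max N1 (max N2 N3), fun ν hν => ?_⟩
        have e3 := h3 ν (le_trans (le_trans (le_max_right _ _) (le_max_right _ _)) hν)
        show v (ev ν (φ * ψ)) ≤ 1
        rw [e3, map_mul]
        exact mul_le_one' (h1 (le_trans (le_max_left _ _) hν))
          (h2 (le_trans (le_trans (le_max_left _ _) (le_max_right _ _)) hν))
      neg_mem' := by
        rintro φ ⟨N1, h1⟩
        obtain ⟨N3, h3⟩ := hevmul (RatFunc.C (-1)) φ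
        refine ⟨max N1 N3, fun ν hν => ?_⟩
        show v (ev ν (-φ)) ≤ 1
        have : -φ = RatFunc.C (-1) * φ := by rw [map_neg, map_one, neg_one_mul]
        rw [this, h3 ν (le_trans (le_max_right _ _) hν)]
        have hC : ev ν (RatFunc.C (-1)) * ev ν φ = -(ev ν φ) := by
          show RatFunc.eval (RingHom.id K) (s ν) (RatFunc.C (-1)) * _ = _
          rw [RatFunc.eval_C]
          simp
        rw [hC, v.map_neg]
        exact h1 (le_trans (le_max_left _ _) hν) }
  have hinv : ∀ φ : RatFunc K, φ ∈ Wsub ∨ φ⁻¹ ∈ Wsub := by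
    intro φ
    by_cases hφ : φ = 0
    · exact Or.inl (by rw [hφ]; exact zeromem)
    rcases TRI1 φ hφ with ⟨N, h⟩ | ⟨N, h⟩ | ⟨N, h⟩
    · exact Or.inl ⟨N, fun ν hν => (h ν hν).le⟩
    · exact Or.inl ⟨N, fun ν hν => (h ν hν).le⟩
    · obtain ⟨N2, h2⟩ := INV φ hφ
      refine Or.inr ⟨max N N2, fun ν hν => ?_⟩
      have e1 := h ν (le_trans (le_max_left _ _) hν)
      have e2 := h2 ν (le_trans (le_max_right _ _) hν)
      have : v (ev ν φ⁻¹) = (v (ev ν φ))⁻¹ := eq_inv_of_mul_eq_one_left e2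
      show v (ev ν φ⁻¹) ≤ 1
      rw [this]
      exact ((inv_lt_one₀ (zero_lt_one.trans e1)).2 e1).le
  refine ⟨ValuationSubring.ofSubring Wsub hinv, rfl, ?_, ?_⟩
  · intro a
    have hCa : ∀ ν, ev ν (RatFunc.C a) = a := fun ν => RatFunc.eval_C _ _
    constructor
    · rintro ⟨N, h⟩
      have := h (le_refl N)
      rwa [show RatFunc.eval (RingHom.id K) (s N) (RatFunc.C a) = a from hCa N] at this
    · intro ha
      exact ⟨Classical.arbitrary Λ, fun ν _ => by
        rw [show RatFunc.eval (RingHom.id K) (s ν) (RatFunc.C a) = a from hCa ν]; exact ha⟩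
  · intro φ
    rw [IsLocalRing.mem_maximalIdeal, mem_nonunits_iff]
    constructor
    · intro hnu
      by_cases h0 : (φ : RatFunc K) = 0
      · refine ⟨Classical.arbitrary Λ, fun ν _ => ?_⟩
        rw [h0, show RatFunc.eval (RingHom.id K) (s ν) (0 : RatFunc K) = 0 from
          RatFunc.eval_zero _ _, map_zero]
        exact zero_lt_one
      rcases TRI1 (φ : RatFunc K) h0 with ⟨N, h⟩ | ⟨N, h⟩ | ⟨N, h⟩
      · exact ⟨N, fun ν hν => h ν hν⟩
      · exfalso
        apply hnu
        obtain ⟨N2, h2⟩ := INV (φ : RatFunc K) h0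
        have hinvmem : ((φ : RatFunc K))⁻¹ ∈ Wsub := by
          refine ⟨max N N2, fun ν hν => ?_⟩
          have e1 := h ν (le_trans (le_max_left _ _) hν)
          have e2 := h2 ν (le_trans (le_max_right _ _) hν)
          rw [e1, mul_one] at e2
          show v (ev ν (φ : RatFunc K)⁻¹) ≤ 1
          rw [e2]
        exact isUnit_iff_exists_inv.2
          ⟨⟨(φ : RatFunc K)⁻¹, hinvmem⟩, Subtype.ext (mul_inv_cancel₀ h0)⟩
      · exfalso
        obtain ⟨N1, h1⟩ := φ.2
        have hlt := h (max N N1) (le_max_left _ _)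
        have hle := h1 (le_max_right N N1)
        exact absurd hle (not_le.2 hlt)
    · rintro ⟨N, h⟩ hunit
      obtain ⟨ψ, hψ⟩ := isUnit_iff_exists_inv.1 hunit
      obtain ⟨N2, h2⟩ := ψ.2
      obtain ⟨N3, h3⟩ := hevmul (φ : RatFunc K) (ψ : RatFunc K)
      have hprod : (φ : RatFunc K) * (ψ : RatFunc K) = 1 := by
        exact_mod_cast congrArg Subtype.val hψ
      set ν := max N (max N2 N3) with hνdef
      have e := h3 ν (le_trans (le_trans (le_max_right _ _) (le_max_right _ _)) (le_refl ν))
      rw [hprod] at e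
      have e1 : (1 : Γ) = v (ev ν (φ : RatFunc K)) * v (ev ν (ψ : RatFunc K)) := by
        rw [← map_mul, ← e,
          show ev ν (1 : RatFunc K) = 1 from RatFunc.eval_one _ _, map_one]
      have hlt : v (ev ν (φ : RatFunc K)) * v (ev ν (ψ : RatFunc K)) < 1 := by
        calc v (ev ν (φ : RatFunc K)) * v (ev ν (ψ : RatFunc K))
            ≤ v (ev ν (φ : RatFunc K)) * 1 :=
              mul_le_mul_right (h2 (le_trans (le_max_left _ _) (le_max_right _ _))) _
          _ = v (ev ν (φ : RatFunc K)) := mul_one _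
          _ < 1 := h (le_max_left _ _)
      rw [← e1] at hlt
      exact lt_irrefl _ hlt


end Assemble

end PM

theorem glue {K : Type*} [Field K] {Γ : Type*} [LinearOrderedCommGroupWithZero Γ]
    (v : Valuation K Γ) {Λ : Type*} [LinearOrder Λ] [WellFoundedLT Λ] [Nonempty Λ]
    (hnomax : ∀ ν : Λ, ∃ ρ : Λ, ν < ρ) (s : Λ → K) (hE : IsPseudoMonotone v s)
    {Γ' : Type*} [LinearOrderedCommGroupWithZero Γ'] (w : Valuation (AlgebraicClosure K) Γ')
    (hle : ∀ x y : K, v x ≤ v y ↔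
      w (algebraMap K (AlgebraicClosure K) x) ≤ w (algebraMap K (AlgebraicClosure K) y)) :
    ∃ W : ValuationSubring (RatFunc K),
      (W : Set (RatFunc K)) = VESet v s ∧
      (∀ a : K, RatFunc.C a ∈ W ↔ v a ≤ 1) ∧
      ∀ φ : W, φ ∈ IsLocalRing.maximalIdeal W ↔
        ∃ N : Λ, ∀ ⦃ν : Λ⦄, N ≤ ν →
          v (RatFunc.eval (RingHom.id K) (s ν) (φ : RatFunc K)) < 1 := by
  classical
  set L := AlgebraicClosure K with hL
  set ι := algebraMap K L with hι
  have hlt : ∀ x y : K, v x < v y ↔ w (ι x) < w (ι y) := fun x y =>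
    lt_iff_lt_of_le_iff_le (hle y x)
  have heq : ∀ x y : K, v x = v y ↔ w (ι x) = w (ι y) := fun x y => by
    rw [le_antisymm_iff, le_antisymm_iff]
    exact and_congr (hle x y) (hle y x)
  set t : Λ → L := fun ν => ι (s ν) with ht
  have hEw : IsPseudoMonotone w t := by
    rcases hE with h | h | h
    · refine Or.inl fun ν ρ σ h1 h2 => ?_
      have h3 := (hlt _ _).1 (h h1 h2)
      rwa [map_sub ι, map_sub ι] at h3
    · refine Or.inr (Or.inl fun ν ρ σ h1 h2 => ?_)
      have h3 := (hlt _ _).1 (h h1 h2)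
      rwa [map_sub ι, map_sub ι] at h3
    · refine Or.inr (Or.inr ⟨fun ν μ hne hEq => h.1 hne ?_, fun ν μ ν' μ' h1 h2 => ?_⟩)
      · exact ι.injective hEq
      · have h3 := (heq _ _).1 (h.2 h1 h2)
        rwa [map_sub ι, map_sub ι] at h3
  obtain ⟨δ, hshape, hnz, hroot⟩ := exists_gauge hnomax w t hEw
  have ekey : ∀ (p : Polynomial K) (ν : Λ), (p.map ι).eval (t ν) = ι (p.eval (s ν)) := by
    intro p ν
    rw [Polynomial.eval_map]
    exact Polynomial.eval₂_at_apply ι (s ν)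
  have VNONZ : ∀ f : Polynomial K, f ≠ 0 → ∃ N, ∀ ν, N ≤ ν → f.eval (s ν) ≠ 0 := by
    intro f hf
    obtain ⟨N, hN⟩ := core_nz w t δ hnz hroot (f.map ι) (Polynomial.map_ne_zero hf)
    refine ⟨N, fun ν hν h0 => hN ν hν ?_⟩
    rw [ekey f ν, h0, map_zero]
  have VTRI : ∀ f g : Polynomial K, f ≠ 0 → g ≠ 0 →
      (∃ N, ∀ ν, N ≤ ν → v (f.eval (s ν)) < v (g.eval (s ν))) ∨
      (∃ N, ∀ ν, N ≤ ν → v (f.eval (s ν)) = v (g.eval (s ν))) ∨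
      (∃ N, ∀ ν, N ≤ ν → v (g.eval (s ν)) < v (f.eval (s ν))) := by
    intro f g hf hg
    rcases core_tri hnomax w t δ hshape hnz hroot (f.map ι) (g.map ι)
      (Polynomial.map_ne_zero hf) (Polynomial.map_ne_zero hg) with ⟨N, h⟩ | ⟨N, h⟩ | ⟨N, h⟩
    · refine Or.inl ⟨N, fun ν hν => (hlt _ _).2 ?_⟩
      have := h ν hν
      rwa [ekey f ν, ekey g ν] at this
    · refine Or.inr (Or.inl ⟨N, fun ν hν => (heq _ _).2 ?_⟩)
      have := h ν hν
      rwa [ekey f ν, ekey g ν] at this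
    · refine Or.inr (Or.inr ⟨N, fun ν hν => (hlt _ _).2 ?_⟩)
      have := h ν hν
      rwa [ekey f ν, ekey g ν] at this
  exact assemble v hnomax s VNONZ VTRI



/-- Let `V` be a valuation domain with quotient field `K` and `E = {s_ν}` a
pseudo-monotone sequence in `K`. Then `V_E = {φ ∈ K(X) : φ(s_ν) ∈ V for ν large}` is a
valuation domain of `K(X)` extending `V`, whose maximal ideal is
`M_E = {φ ∈ K(X) : φ(s_ν) ∈ M for ν large}`. -/
theorem stmt6 {K : Type*} [Field K] {Γ : Type*} [LinearOrderedCommGroupWithZero Γ]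
    (v : Valuation K Γ) {Λ : Type*} [LinearOrder Λ] [WellFoundedLT Λ] [Nonempty Λ]
    (hnomax : ∀ ν : Λ, ∃ ρ : Λ, ν < ρ) (s : Λ → K) (hE : IsPseudoMonotone v s) :
    ∃ W : ValuationSubring (RatFunc K),
      (W : Set (RatFunc K)) = VESet v s ∧
      (∀ a : K, RatFunc.C a ∈ W ↔ v a ≤ 1) ∧
      ∀ φ : W, φ ∈ IsLocalRing.maximalIdeal W ↔
        ∃ N : Λ, ∀ ⦃ν : Λ⦄, N ≤ ν →
          v (RatFunc.eval (RingHom.id K) (s ν) (φ : RatFunc K)) < 1 := by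
  obtain ⟨Γ', iΓ, w, hle⟩ := exists_ext v
  exact @glue K _ Γ _ v Λ _ _ _ hnomax s hE Γ' iΓ w hle
end

section
/- Let V be a valuation domain with quotient field K, E ⊂ K a strictly pseudo-monotone sequence (pseudo-convergent or pseudo-divergent) having a pseudo-limit in the algebraic closure of K, and let p₁, p₂ be monic irreducible polynomials of minimal degree among those having a root in \bar K that is a pseudo-limit of E. Then v_E(p₁) = v_E(p₂). -/
open scoped Pointwise Classical

universe u

/-- `p` belongs to `𝒫_E`: `p` is a monic irreducible polynomial of `K[X]` having at least one
root in the algebraic closure `K̄` which is a pseudo-limit of `E` with respect to some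
extension `u` of `v` to `K̄`. -/
def InPE {K : Type u} [Field K] {Γ : Type*} [LinearOrderedCommGroupWithZero Γ]
    (v : Valuation K Γ) {Λ : Type*} [LinearOrder Λ] (s : Λ → K) (p : Polynomial K) : Prop :=
  p.Monic ∧ Irreducible p ∧
    ∃ (Γ' : Type u) (_ : LinearOrderedCommGroupWithZero Γ')
      (u : Valuation (AlgebraicClosure K) Γ'),
      (u.comap (algebraMap K (AlgebraicClosure K))).IsEquiv v ∧
      ∃ x : AlgebraicClosure K, Polynomial.aeval x p = 0 ∧
        IsPseudoLimitSPM u (fun ν => algebraMap K (AlgebraicClosure K) (s ν)) x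

/-!
Fix an extension `u` of `v` to `K̄` and a pseudo-limit `α` of `E`, and put `δ_ν = u(α - s_ν)`
(Mathlib's multiplicative convention throughout). Any two pseudo-limits give the same `δ_ν` for
large `ν`, while `u(γ - s_ν)` is eventually constant when `γ` is not a pseudo-limit. Factoring
over `K̄`, `u(f(s_ν))` is therefore eventually `C · δ_ν ^ k`, where `k` counts the roots of `f`
that are pseudo-limits, and `δ_ν` is eventually strictly monotone.

So `v(p(s_ν))` is eventually strictly monotone for every `p ∈ 𝒫_E`, whereas `q = p₂ - p₁` has
degree below the minimal one, so none of its roots is a pseudo-limit (its minimal polynomial would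
lie in `𝒫_E`), and `v(q(s_ν))` is eventually constant. In `p₂ = p₁ + q`, if `v(p₁(s_ν))` were
eventually below that constant then `v(p₂(s_ν))` would be eventually constant; so it is
eventually above it, and `v(p₂(s_ν)) = v(p₁(s_ν))`.
-/

open Filter Polynomial

section EventuallyStrictMonotone

variable {Λ β : Type*} [LinearOrder Λ] [LinearOrder β]

def IsEventuallyStrictMonotone (a : Λ → β) : Prop :=
  ∃ N, StrictMonoOn a (Set.Ici N) ∨ StrictAntiOn a (Set.Ici N)

namespace IsEventuallyStrictMonotone

variable {a : Λ → β}

lemma of_lt_iff_lt {γ : Type*} [LinearOrder γ] {b : Λ → γ}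
    (hab : ∀ ν ρ, a ν < a ρ ↔ b ν < b ρ) (ha : IsEventuallyStrictMonotone a) :
    IsEventuallyStrictMonotone b := by
  obtain ⟨N, hN | hN⟩ := ha
  · exact ⟨N, Or.inl fun ν hν ρ hρ h => (hab ν ρ).mp (hN hν hρ h)⟩
  · exact ⟨N, Or.inr fun ν hν ρ hρ h => (hab ρ ν).mp (hN hν hρ h)⟩

lemma comp_of_eventually [Nonempty Λ] {γ : Type*} [LinearOrder γ] {g : β → γ} {S : Set β}
    {b : Λ → γ} (ha : IsEventuallyStrictMonotone a) (hg : StrictMonoOn g S)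
    (hb : ∀ᶠ ν in atTop, a ν ∈ S ∧ b ν = g (a ν)) : IsEventuallyStrictMonotone b := by
  obtain ⟨N, hN⟩ := ha
  obtain ⟨M, hM⟩ := eventually_atTop.mp hb
  have hsub : Set.Ici (max N M) ⊆ Set.Ici N := Set.Ici_subset_Ici.mpr (le_max_left _ _)
  have hM' : ∀ ν ∈ Set.Ici (max N M), a ν ∈ S ∧ b ν = g (a ν) :=
    fun ν hν => hM ν (le_of_max_le_right hν)
  refine ⟨max N M, hN.imp (fun h ν hν ρ hρ hνρ => ?_) (fun h ν hν ρ hρ hνρ => ?_)⟩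
  · rw [(hM' ν hν).2, (hM' ρ hρ).2]
    exact hg (hM' ν hν).1 (hM' ρ hρ).1 (h (hsub hν) (hsub hρ) hνρ)
  · rw [(hM' ν hν).2, (hM' ρ hρ).2]
    exact hg (hM' ρ hρ).1 (hM' ν hν).1 (h (hsub hν) (hsub hρ) hνρ)

lemma eventually_lt_or_eventually_gt [NoMaxOrder Λ] (ha : IsEventuallyStrictMonotone a)
    (c : β) : (∀ᶠ ν in atTop, a ν < c) ∨ ∀ᶠ ν in atTop, c < a ν := by
  obtain ⟨N, hN | hN⟩ := ha
  · by_cases h : ∃ w, N ≤ w ∧ c ≤ a w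
    · obtain ⟨w, hNw, hw⟩ := h
      refine Or.inr ?_
      filter_upwards [eventually_gt_atTop w] with ν hν
      exact hw.trans_lt (hN hNw (hNw.trans hν.le) hν)
    · push Not at h
      exact Or.inl ((eventually_ge_atTop N).mono h)
  · by_cases h : ∃ w, N ≤ w ∧ a w ≤ c
    · obtain ⟨w, hNw, hw⟩ := h
      refine Or.inl ?_
      filter_upwards [eventually_gt_atTop w] with ν hν
      exact (hN hNw (hNw.trans hν.le) hν).trans_le hw
    · push Not at h
      exact Or.inr ((eventually_ge_atTop N).mono h)

lemma not_eventually_eq [Nonempty Λ] [NoMaxOrder Λ] (ha : IsEventuallyStrictMonotone a)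
    (c : β) : ¬ ∀ᶠ ν in atTop, a ν = c := by
  intro h
  obtain ⟨N, hN⟩ := ha
  obtain ⟨M, hM⟩ := eventually_atTop.mp (h.and (eventually_ge_atTop N))
  obtain ⟨ρ, hρ⟩ := exists_gt M
  have hne : a M ≠ a ρ := by
    rcases hN with hN | hN
    · exact (hN (hM M le_rfl).2 (hM ρ hρ.le).2 hρ).ne
    · exact (hN (hM M le_rfl).2 (hM ρ hρ.le).2 hρ).ne'
  exact hne ((hM M le_rfl).1.trans (hM ρ hρ.le).1.symm)

lemma eventually_ne_zero [Nonempty Λ] [NoMaxOrder Λ] {Γ₀ : Type*}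
    [LinearOrderedCommGroupWithZero Γ₀] {a : Λ → Γ₀} (ha : IsEventuallyStrictMonotone a) :
    ∀ᶠ ν in atTop, a ν ≠ 0 := by
  rcases ha.eventually_lt_or_eventually_gt 0 with h | h
  · obtain ⟨ν, hν⟩ := h.exists
    exact absurd hν not_lt_zero
  · exact h.mono fun _ => ne_of_gt

end IsEventuallyStrictMonotone

end EventuallyStrictMonotone

lemma eventually_val_add_eq_left {Λ R Γ₀ : Type*} [LinearOrder Λ] [Nonempty Λ] [NoMaxOrder Λ]
    [Ring R] [LinearOrderedCommMonoidWithZero Γ₀] (v : Valuation R Γ₀) {f g : Λ → R} {c : Γ₀}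
    (hg : ∀ᶠ ν in atTop, v (g ν) = c) (hf : IsEventuallyStrictMonotone fun ν => v (f ν))
    (hfg : IsEventuallyStrictMonotone fun ν => v (f ν + g ν)) :
    ∀ᶠ ν in atTop, v (f ν + g ν) = v (f ν) := by
  rcases hf.eventually_lt_or_eventually_gt c with hlt | hgt
  · refine absurd ?_ (hfg.not_eventually_eq c)
    filter_upwards [hlt, hg] with ν hlt hg
    rw [← hg] at hlt ⊢
    exact v.map_add_eq_of_lt_right hlt
  · filter_upwards [hgt, hg] with ν hgt hg
    exact v.map_add_eq_of_lt_left (hg ▸ hgt)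

section PseudoMonotone

variable {L Γ₀ Λ : Type*} [Field L] [LinearOrderedCommGroupWithZero Γ₀] [LinearOrder Λ]
  {u : Valuation L Γ₀} {t : Λ → L} {α γ : L}

lemma IsPseudoConvergent.val_sub_eq (h : IsPseudoConvergent u t) {ν ρ ρ' : Λ} (hρ : ν < ρ)
    (hρ' : ν < ρ') : u (t ρ - t ν) = u (t ρ' - t ν) := by
  have key : ∀ ⦃a b : Λ⦄, ν < a → a < b → u (t b - t ν) = u (t a - t ν) := fun a b ha hab => by
    rw [show t b - t ν = (t b - t a) + (t a - t ν) by ring,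
      u.map_add_eq_of_lt_right (h ha hab)]
  rcases lt_trichotomy ρ ρ' with hlt | rfl | hlt
  · exact (key hρ hlt).symm
  · rfl
  · exact key hρ' hlt

lemma IsPseudoDivergent.val_sub_eq (h : IsPseudoDivergent u t) {ν ρ ρ' : Λ} (hρ : ρ < ν)
    (hρ' : ρ' < ν) : u (t ν - t ρ) = u (t ν - t ρ') := by
  have key : ∀ ⦃a b : Λ⦄, a < b → b < ν → u (t ν - t a) = u (t ν - t b) := fun a b hab hb => by
    rw [show t ν - t a = (t ν - t b) + (t b - t a) by ring,
      u.map_add_eq_of_lt_left (h hab hb)]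
  rcases lt_trichotomy ρ ρ' with hlt | rfl | hlt
  · exact key hlt hρ'
  · rfl
  · exact (key hlt hρ).symm

lemma IsPseudoConvergent.not_isPseudoDivergent [Nonempty Λ] [NoMaxOrder Λ]
    (h : IsPseudoConvergent u t) : ¬ IsPseudoDivergent u t := fun h' => by
  obtain ⟨ρ, hρ⟩ := exists_gt (Classical.arbitrary Λ)
  obtain ⟨σ, hσ⟩ := exists_gt ρ
  exact (h hρ hσ).asymm (h' hρ hσ)

lemma IsPseudoConvergent.isPseudoLimitPcv_or_exists_eventually_eq [NoMaxOrder Λ]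
    (h : IsPseudoConvergent u t) (γ : L) :
    IsPseudoLimitPcv u t γ ∨ ∃ c ≠ 0, ∀ᶠ ν in atTop, u (γ - t ν) = c := by
  refine or_iff_not_imp_left.mpr fun hγ => ?_
  simp only [IsPseudoLimitPcv, not_forall] at hγ
  obtain ⟨ν₀, ρ₀, hρ₀, hne⟩ := hγ
  obtain ⟨σ, hσ⟩ := exists_gt ρ₀
  have hδ : u (t ρ₀ - t ν₀) ≠ 0 := (zero_le.trans_lt (h hρ₀ hσ)).ne'
  have hsplit : ∀ μ, γ - t μ = (γ - t ν₀) - (t μ - t ν₀) := fun μ => by ring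
  rcases Ne.lt_or_gt hne with hlt | hgt
  · refine ⟨_, hδ, ?_⟩
    filter_upwards [eventually_gt_atTop ν₀] with μ hμ
    rw [hsplit, u.map_sub_eq_of_lt_right (h.val_sub_eq hμ hρ₀ ▸ hlt), h.val_sub_eq hμ hρ₀]
  · refine ⟨_, (zero_le.trans_lt hgt).ne', ?_⟩
    filter_upwards [eventually_gt_atTop ν₀] with μ hμ
    rw [hsplit, u.map_sub_eq_of_lt_left (h.val_sub_eq hμ hρ₀ ▸ hgt)]

lemma IsPseudoDivergent.isPseudoLimitPdv_or_exists_eventually_eq [Nonempty Λ] [NoMaxOrder Λ]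
    (h : IsPseudoDivergent u t) (γ : L) :
    IsPseudoLimitPdv u t γ ∨ ∃ c ≠ 0, ∀ᶠ ν in atTop, u (γ - t ν) = c := by
  have hsplit : ∀ μ ν, γ - t ν = (γ - t μ) - (t ν - t μ) := fun μ ν => by ring
  by_cases hc : ∃ μ, ∀ ν, μ < ν → u (t ν - t μ) < u (γ - t μ)
  · obtain ⟨μ, hμ⟩ := hc
    obtain ⟨ν₀, hν₀⟩ := exists_gt μ
    refine Or.inr ⟨_, (zero_le.trans_lt (hμ ν₀ hν₀)).ne', ?_⟩
    filter_upwards [eventually_gt_atTop μ] with ν hν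
    rw [hsplit μ, u.map_sub_eq_of_lt_left (hμ ν hν)]
  · push Not at hc
    let b := Classical.arbitrary Λ
    obtain ⟨σ, hbσ, hσ⟩ := hc b
    obtain ⟨N, hN⟩ := exists_gt σ
    refine Or.inl ⟨N, fun ν hν ρ hρ => ?_⟩
    have hσν : σ < ν := hN.trans_le hν
    have hbν : u (t ν - t b) = u (t ν - t σ) := h.val_sub_eq (hbσ.trans hσν) hσν
    have hlt : u (γ - t b) < u (t ν - t b) := hbν ▸ hσ.trans_lt (h hbσ hσν)
    rw [hsplit b, u.map_sub_eq_of_lt_right hlt, h.val_sub_eq (hbσ.trans hσν) hρ,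
      u.map_sub_swap]

lemma exists_eventually_val_sub_eq_of_not_isPseudoLimitSPM [Nonempty Λ] [NoMaxOrder Λ]
    (ht : IsPseudoConvergent u t ∨ IsPseudoDivergent u t) (hγ : ¬ IsPseudoLimitSPM u t γ) :
    ∃ c ≠ 0, ∀ᶠ ν in atTop, u (γ - t ν) = c := by
  rcases ht with h | h
  · exact (h.isPseudoLimitPcv_or_exists_eventually_eq γ).resolve_left
      fun hl => hγ (Or.inl ⟨h, hl⟩)
  · exact (h.isPseudoLimitPdv_or_exists_eventually_eq γ).resolve_left
      fun hl => hγ (Or.inr ⟨h, hl⟩)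

namespace IsPseudoLimitSPM

variable [Nonempty Λ] [NoMaxOrder Λ]

lemma eventually_val_sub_eq (hα : IsPseudoLimitSPM u t α) (hγ : IsPseudoLimitSPM u t γ) :
    ∀ᶠ ν in atTop, u (γ - t ν) = u (α - t ν) := by
  rcases hα with ⟨hcv, hα⟩ | ⟨hdv, N, hα⟩ <;> rcases hγ with ⟨hcv', hγ⟩ | ⟨hdv', M, hγ⟩
  · refine Eventually.of_forall fun ν => ?_
    obtain ⟨ρ, hρ⟩ := exists_gt ν
    exact (hγ hρ).trans (hα hρ).symm
  · exact absurd hdv' hcv.not_isPseudoDivergent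
  · exact absurd hdv hcv'.not_isPseudoDivergent
  · filter_upwards [eventually_ge_atTop N, eventually_ge_atTop M,
      eventually_gt_atTop (Classical.arbitrary Λ)] with ν hN hM hρ
    exact (hγ hM hρ).trans (hα hN hρ).symm

lemma isEventuallyStrictMonotone (hα : IsPseudoLimitSPM u t α) :
    IsEventuallyStrictMonotone fun ν => u (α - t ν) := by
  rcases hα with ⟨h, hα⟩ | ⟨h, N, hα⟩
  · refine ⟨Classical.arbitrary Λ, Or.inr fun ν _ ρ _ hνρ => ?_⟩
    obtain ⟨σ, hσ⟩ := exists_gt ρ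
    simpa only [hα hνρ, hα hσ] using h hνρ hσ
  · obtain ⟨N', hN'⟩ := exists_gt N
    refine ⟨N', Or.inl fun ν hν ρ _ hνρ => ?_⟩
    have hNν : N < ν := hN'.trans_le hν
    simpa only [hα hNν.le hNν, hα (hNν.le.trans hνρ.le) hνρ, u.map_sub_swap (t N),
      u.map_sub_swap (t ν) (t ρ)] using h hNν hνρ

lemma exists_eventually_prod_val_sub_eq (hα : IsPseudoLimitSPM u t α) (M : Multiset L) :
    ∃ C ≠ 0, ∀ᶠ ν in atTop, (M.map fun γ => u (t ν - γ)).prod =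
      C * u (α - t ν) ^ (M.filter (IsPseudoLimitSPM u t)).card := by
  induction M using Multiset.induction with
  | empty => exact ⟨1, one_ne_zero, Eventually.of_forall fun ν => by simp⟩
  | cons γ M ih =>
    obtain ⟨C, hC, hM⟩ := ih
    by_cases hγ : IsPseudoLimitSPM u t γ
    · refine ⟨C, hC, ?_⟩
      filter_upwards [hM, hα.eventually_val_sub_eq hγ] with ν hM hγν
      rw [Multiset.map_cons, Multiset.prod_cons, hM, Multiset.filter_cons_of_pos _ hγ,
        Multiset.card_cons, pow_succ', u.map_sub_swap, hγν, mul_left_comm]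
    · obtain ⟨c, hc, hγc⟩ :=
        exists_eventually_val_sub_eq_of_not_isPseudoLimitSPM (hα.imp And.left And.left) hγ
      refine ⟨c * C, mul_ne_zero hc hC, ?_⟩
      filter_upwards [hM, hγc] with ν hM hγν
      rw [Multiset.map_cons, Multiset.prod_cons, hM, Multiset.filter_cons_of_neg _ hγ,
        u.map_sub_swap, hγν, mul_assoc]

end IsPseudoLimitSPM

end PseudoMonotone

lemma Polynomial.Monic.natDegree_sub_lt {R : Type*} [Ring R] [Nontrivial R] {p q : R[X]}
    (hp : p.Monic) (hq : q.Monic) (hdeg : p.natDegree = q.natDegree) (hpq : p - q ≠ 0) :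
    (p - q).natDegree < q.natDegree := by
  have hsame : p.degree = q.degree := by
    rw [degree_eq_natDegree hp.ne_zero, degree_eq_natDegree hq.ne_zero, hdeg]
  refine natDegree_lt_natDegree hpq (hsame ▸ degree_sub_lt_left hsame hp.ne_zero ?_)
  rw [hp.leadingCoeff, hq.leadingCoeff]

section Polynomial

variable {L Γ₀ Λ : Type*} [Field L] [IsAlgClosed L] [LinearOrderedCommGroupWithZero Γ₀]
  [LinearOrder Λ] [Nonempty Λ] [NoMaxOrder Λ] {u : Valuation L Γ₀} {t : Λ → L} {α : L}
  {f : L[X]}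

lemma Valuation.map_eval_eq_mul_prod (u : Valuation L Γ₀) (f : L[X]) (x : L) :
    u (f.eval x) = u f.leadingCoeff * (f.roots.map fun γ => u (x - γ)).prod := by
  conv_lhs => rw [(IsAlgClosed.splits f).eq_prod_roots]
  simp [eval_multiset_prod, map_multiset_prod, Multiset.map_map]

lemma IsPseudoLimitSPM.exists_eventually_val_eval_eq (hα : IsPseudoLimitSPM u t α)
    (hf : f ≠ 0) : ∃ C ≠ 0, ∀ᶠ ν in atTop,
      u (f.eval (t ν)) = C * u (α - t ν) ^ (f.roots.filter (IsPseudoLimitSPM u t)).card := by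
  obtain ⟨C, hC, hprod⟩ := hα.exists_eventually_prod_val_sub_eq f.roots
  refine ⟨u f.leadingCoeff * C, mul_ne_zero (by simpa using hf) hC, ?_⟩
  filter_upwards [hprod] with ν hν
  rw [u.map_eval_eq_mul_prod, hν, mul_assoc]

lemma IsPseudoLimitSPM.isEventuallyStrictMonotone_val_eval (hα : IsPseudoLimitSPM u t α)
    (hf : f ≠ 0) (hroot : f.IsRoot α) :
    IsEventuallyStrictMonotone fun ν => u (f.eval (t ν)) := by
  obtain ⟨C, hC, hval⟩ := hα.exists_eventually_val_eval_eq hf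
  have hk : (f.roots.filter (IsPseudoLimitSPM u t)).card ≠ 0 :=
    (Multiset.card_pos_iff_exists_mem.mpr ⟨α, Multiset.mem_filter.mpr
      ⟨(mem_roots hf).mpr hroot, hα⟩⟩).ne'
  have hmono : StrictMonoOn (fun x => C * x ^ (f.roots.filter (IsPseudoLimitSPM u t)).card)
      (Set.Ioi 0) := fun x hx y _ hxy =>
    (mul_lt_mul_iff_right₀ (zero_lt_iff.mpr hC)).mpr (pow_lt_pow_left₀ hxy hx.le hk)
  refine hα.isEventuallyStrictMonotone.comp_of_eventually hmono ?_
  filter_upwards [hval, hα.isEventuallyStrictMonotone.eventually_ne_zero] with ν hν hne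
  exact ⟨zero_lt_iff.mpr hne, hν⟩

lemma IsPseudoLimitSPM.exists_eventually_val_eval_eq_const (hα : IsPseudoLimitSPM u t α)
    (hf : f ≠ 0) (hroots : ∀ γ ∈ f.roots, ¬ IsPseudoLimitSPM u t γ) :
    ∃ C, ∀ᶠ ν in atTop, u (f.eval (t ν)) = C := by
  obtain ⟨C, -, hval⟩ := hα.exists_eventually_val_eval_eq hf
  rw [Multiset.filter_eq_nil.mpr hroots] at hval
  exact ⟨C, by simpa using hval⟩

end Polynomial

section PE

variable {K : Type*} [Field K] {Γ : Type*} [LinearOrderedCommGroupWithZero Γ]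
  {v : Valuation K Γ} {Λ : Type*} [LinearOrder Λ] [Nonempty Λ] [NoMaxOrder Λ] {s : Λ → K}

lemma InPE.isEventuallyStrictMonotone {p : K[X]} (hp : InPE v s p) :
    IsEventuallyStrictMonotone fun ν => v (p.eval (s ν)) := by
  obtain ⟨hmon, -, Γ', _, u, hequiv, α, hroot, hα⟩ := hp
  have hf : p.map (algebraMap K (AlgebraicClosure K)) ≠ 0 := (hmon.map _).ne_zero
  refine (hα.isEventuallyStrictMonotone_val_eval hf ?_).of_lt_iff_lt fun ν ρ => ?_
  · rwa [IsRoot, eval_map, ← aeval_def]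
  · simpa only [eval_map_apply, Valuation.comap_apply] using hequiv.lt_iff_lt

lemma InPE.exists_eventually_val_eval_eq_of_natDegree_lt {p q : K[X]} (hp : InPE v s p)
    (hmin : ∀ r : K[X], InPE v s r → p.natDegree ≤ r.natDegree) (hq : q ≠ 0)
    (hdeg : q.natDegree < p.natDegree) : ∃ c, ∀ᶠ ν in atTop, v (q.eval (s ν)) = c := by
  obtain ⟨-, -, Γ', _, u, hequiv, α, -, hα⟩ := hp
  have hroots : ∀ γ ∈ (q.map (algebraMap K (AlgebraicClosure K))).roots,
      ¬ IsPseudoLimitSPM u (fun ν => algebraMap K (AlgebraicClosure K) (s ν)) γ := by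
    intro γ hγ hlim
    have hint : IsIntegral K γ := Algebra.IsIntegral.isIntegral γ
    have hγq : aeval γ q = 0 := by rwa [mem_roots_map hq, ← aeval_def] at hγ
    have hγPE : InPE v s (minpoly K γ) :=
      ⟨minpoly.monic hint, minpoly.irreducible hint, Γ', _, u, hequiv, γ, minpoly.aeval K γ, hlim⟩
    exact hdeg.not_ge ((hmin _ hγPE).trans (natDegree_le_of_dvd (minpoly.dvd K γ hγq) hq))
  obtain ⟨C, hC⟩ := hα.exists_eventually_val_eval_eq_const (map_ne_zero hq) hroots
  obtain ⟨N, hN⟩ := eventually_atTop.mp hC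
  refine ⟨v (q.eval (s N)), ?_⟩
  filter_upwards [eventually_ge_atTop N] with ν hν
  refine hequiv.eq_iff.mp ?_
  simp only [Valuation.comap_apply, ← eval_map_apply, hN ν hν, hN N le_rfl]

end PE

theorem stmt9_general {K : Type u} [Field K] {Γ : Type*} [LinearOrderedCommGroupWithZero Γ]
    (v : Valuation K Γ) {Λ : Type*} [LinearOrder Λ] [Nonempty Λ]
    (hnomax : ∀ ν : Λ, ∃ ρ : Λ, ν < ρ) (s : Λ → K)
    (p₁ p₂ : Polynomial K) (hp₁ : InPE v s p₁) (hp₂ : InPE v s p₂)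
    (hmin₁ : ∀ q : Polynomial K, InPE v s q → p₁.natDegree ≤ q.natDegree)
    (hmin₂ : ∀ q : Polynomial K, InPE v s q → p₂.natDegree ≤ q.natDegree) :
    ∃ N : Λ, ∀ ⦃ν : Λ⦄, N ≤ ν →
      v (Polynomial.eval (s ν) p₁) = v (Polynomial.eval (s ν) p₂) := by
  have : NoMaxOrder Λ := ⟨hnomax⟩
  by_cases hq : p₂ - p₁ = 0
  · exact ⟨Classical.arbitrary Λ, fun ν _ => by rw [sub_eq_zero.mp hq]⟩
  have hdeg : (p₂ - p₁).natDegree < p₁.natDegree :=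
    hp₂.1.natDegree_sub_lt hp₁.1 ((hmin₂ p₁ hp₁).antisymm (hmin₁ p₂ hp₂)) hq
  obtain ⟨c, hc⟩ := hp₁.exists_eventually_val_eval_eq_of_natDegree_lt hmin₁ hq hdeg
  have hp₂' : IsEventuallyStrictMonotone fun ν => v (p₁.eval (s ν) + (p₂ - p₁).eval (s ν)) := by
    simpa using hp₂.isEventuallyStrictMonotone
  obtain ⟨N, hN⟩ := eventually_atTop.mp
    (eventually_val_add_eq_left v hc hp₁.isEventuallyStrictMonotone hp₂')
  exact ⟨N, fun ν hν => by simpa using (hN ν hν).symm⟩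

/-- Let `E` be a strictly pseudo-monotone sequence having a pseudo-limit in
`K̄`, and let `p₁, p₂ ∈ 𝒫_E` be of minimal degree. Then `v_E(p₁) = v_E(p₂)` (equivalently,
`v(p₁(s_ν)) = v(p₂(s_ν))` for all sufficiently large `ν`). -/
theorem stmt9 {K : Type u} [Field K] {Γ : Type*} [LinearOrderedCommGroupWithZero Γ]
    (v : Valuation K Γ) {Λ : Type*} [LinearOrder Λ] [WellFoundedLT Λ] [Nonempty Λ]
    (hnomax : ∀ ν : Λ, ∃ ρ : Λ, ν < ρ) (s : Λ → K)
    (hE : IsPseudoConvergent v s ∨ IsPseudoDivergent v s)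
    (p₁ p₂ : Polynomial K) (hp₁ : InPE v s p₁) (hp₂ : InPE v s p₂)
    (hmin₁ : ∀ q : Polynomial K, InPE v s q → p₁.natDegree ≤ q.natDegree)
    (hmin₂ : ∀ q : Polynomial K, InPE v s q → p₂.natDegree ≤ q.natDegree) :
    ∃ N : Λ, ∀ ⦃ν : Λ⦄, N ≤ ν →
      v (Polynomial.eval (s ν) p₁) = v (Polynomial.eval (s ν) p₂) :=
  stmt9_general v hnomax s p₁ p₂ hp₁ hp₂ hmin₁ hmin₂
end

section
/- Let V be a valuation domain, E ⊂ K a strictly pseudo-monotone sequence and φ ∈ K(X) non-constant. If degdom_E(φ) > 0 then {φ(s_ν)} is definitively a strictly pseudo-monotone sequence of the same kind as E (pseudo-convergent if E is pseudo-convergent, pseudo-divergent if E is pseudo-divergent), and 0 is a pseudo-limit of φ(E), so that the set of pseudo-limits of φ(E) equals its breadth ideal. -/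
open scoped Pointwise Classical

open Classical in
/-- The dominating degree of `φ ∈ K(X)` with respect to a strictly pseudo-monotone sequence
`s` and an extension `u` of the valuation to the algebraic closure: the number of zeros of
`φ` (with multiplicity) that are pseudo-limits of `E`, minus the number of such poles. -/
noncomputable def degdom {K : Type*} [Field K] {Γ' : Type*}
    [LinearOrderedCommGroupWithZero Γ'] (u : Valuation (AlgebraicClosure K) Γ')
    {Λ : Type*} [LinearOrder Λ] (s : Λ → K) (φ : RatFunc K) : ℤ :=
  ((((φ.num.map (algebraMap K (AlgebraicClosure K))).roots.filter
      (fun x => IsPseudoLimitSPM u (fun ν => algebraMap K (AlgebraicClosure K) (s ν)) x)).card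
        : ℤ)
    - (((φ.denom.map (algebraMap K (AlgebraicClosure K))).roots.filter
      (fun x => IsPseudoLimitSPM u (fun ν => algebraMap K (AlgebraicClosure K) (s ν)) x)).card
        : ℤ))

section StmtElevenAux

open Polynomial

variable {L : Type*} [Field L] {Γ' : Type*} [LinearOrderedCommGroupWithZero Γ']
variable {Λ : Type*} [LinearOrder Λ]
variable {w : Valuation L Γ'} {t : Λ → L}

lemma stmt11_pcv_indep (h : IsPseudoConvergent w t) {ν ρ ρ' : Λ} (h1 : ν < ρ) (h2 : ν < ρ') :
    w (t ρ - t ν) = w (t ρ' - t ν) := by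
  rcases lt_trichotomy ρ ρ' with hl | rfl | hl
  · have h3 := w.map_add_eq_of_lt_right (h h1 hl)
    have e : (t ρ' - t ρ) + (t ρ - t ν) = t ρ' - t ν := by ring
    rw [e] at h3
    exact h3.symm
  · rfl
  · have h3 := w.map_add_eq_of_lt_right (h h2 hl)
    have e : (t ρ - t ρ') + (t ρ' - t ν) = t ρ - t ν := by ring
    rw [e] at h3
    exact h3

lemma stmt11_pcv_pos (hnomax : ∀ ν : Λ, ∃ ρ, ν < ρ) (h : IsPseudoConvergent w t) {ν ρ : Λ}
    (h1 : ν < ρ) : 0 < w (t ρ - t ν) := by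
  obtain ⟨σ, hσ⟩ := hnomax ρ
  exact lt_of_le_of_lt zero_le' (h h1 hσ)

lemma stmt11_pcv_dichotomy (hnomax : ∀ ν : Λ, ∃ ρ, ν < ρ) (h : IsPseudoConvergent w t) (α : L) :
    IsPseudoLimitPcv w t α ∨ ∃ N c, c ≠ 0 ∧ ∀ ν, N ≤ ν → w (t ν - α) = c := by
  by_cases hpl : IsPseudoLimitPcv w t α
  · exact Or.inl hpl
  right
  rw [IsPseudoLimitPcv] at hpl
  push_neg at hpl
  obtain ⟨ν₀, ρ₀, h1, hne⟩ := hpl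
  obtain ⟨N, hN⟩ := hnomax ν₀
  rcases hne.lt_or_gt with hlt | hlt
  · refine ⟨N, w (t ρ₀ - t ν₀), (stmt11_pcv_pos hnomax h h1).ne', fun ν hν => ?_⟩
    have hν₀ : ν₀ < ν := lt_of_lt_of_le hN hν
    have hδ : w (t ν - t ν₀) = w (t ρ₀ - t ν₀) := stmt11_pcv_indep h hν₀ h1
    have hlt2 : w (α - t ν₀) < w (t ν - t ν₀) := by rw [hδ]; exact hlt
    have h4 := w.map_sub_eq_of_lt_left hlt2
    have e : (t ν - t ν₀) - (α - t ν₀) = t ν - α := by ring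
    rw [e] at h4
    rw [h4, hδ]
  · refine ⟨N, w (α - t ν₀), ((stmt11_pcv_pos hnomax h h1).trans hlt).ne', fun ν hν => ?_⟩
    have hν₀ : ν₀ < ν := lt_of_lt_of_le hN hν
    have hδ : w (t ν - t ν₀) = w (t ρ₀ - t ν₀) := stmt11_pcv_indep h hν₀ h1
    have hlt2 : w (t ν - t ν₀) < w (α - t ν₀) := by rw [hδ]; exact hlt
    have h4 := w.map_sub_eq_of_lt_right hlt2
    have e : (t ν - t ν₀) - (α - t ν₀) = t ν - α := by ring
    rw [e] at h4
    exact h4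

lemma stmt11_pdv_indep (h : IsPseudoDivergent w t) {ν ρ ρ' : Λ} (h1 : ρ < ν) (h2 : ρ' < ν) :
    w (t ν - t ρ) = w (t ν - t ρ') := by
  rcases lt_trichotomy ρ ρ' with hl | rfl | hl
  · have h3 := w.map_add_eq_of_lt_left (h hl h2)
    have e : (t ν - t ρ') + (t ρ' - t ρ) = t ν - t ρ := by ring
    rw [e] at h3
    exact h3
  · rfl
  · have h3 := w.map_add_eq_of_lt_left (h hl h1)
    have e : (t ν - t ρ) + (t ρ - t ρ') = t ν - t ρ' := by ring
    rw [e] at h3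
    exact h3.symm

lemma stmt11_pdv_dichotomy [Nonempty Λ] (hnomax : ∀ ν : Λ, ∃ ρ, ν < ρ)
    (h : IsPseudoDivergent w t) (α : L) :
    IsPseudoLimitPdv w t α ∨ ∃ N c, c ≠ 0 ∧ ∀ ν, N ≤ ν → w (t ν - α) = c := by
  obtain ⟨ν₀⟩ := ‹Nonempty Λ›
  by_cases hcase : ∀ ν₁, ν₀ < ν₁ → w (t ν₁ - t ν₀) < w (α - t ν₀)
  · right
    obtain ⟨ν₁, h1⟩ := hnomax ν₀
    obtain ⟨ν₂, h2⟩ := hnomax ν₁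
    refine ⟨ν₁, w (α - t ν₀), ?_, fun ν hν => ?_⟩
    · have hp : 0 < w (t ν₂ - t ν₁) := lt_of_le_of_lt zero_le' (h h1 h2)
      have he : w (t ν₂ - t ν₀) = w (t ν₂ - t ν₁) := stmt11_pdv_indep h (h1.trans h2) h2
      have h3 := hcase ν₂ (h1.trans h2)
      rw [he] at h3
      exact (hp.trans h3).ne'
    · have hν₀ : ν₀ < ν := h1.trans_le hν
      have h4 := w.map_sub_eq_of_lt_right (hcase ν hν₀)
      have e : (t ν - t ν₀) - (α - t ν₀) = t ν - α := by ring
      rw [e] at h4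
      exact h4
  · left
    push_neg at hcase
    obtain ⟨ν₁, hν₁, hge⟩ := hcase
    obtain ⟨ν₂, h2⟩ := hnomax ν₁
    refine ⟨ν₂, fun ν hν ρ hρ => ?_⟩
    have hν₁ν : ν₁ < ν := h2.trans_le hν
    have hν₀ν : ν₀ < ν := hν₁.trans hν₁ν
    have he : w (t ν - t ν₀) = w (t ν - t ν₁) := stmt11_pdv_indep h hν₀ν hν₁ν
    have hgt : w (α - t ν₀) < w (t ν - t ν₀) := by
      rw [he]; exact lt_of_le_of_lt hge (h hν₁ hν₁ν)
    have h4 := w.map_sub_eq_of_lt_left hgt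
    have e : (t ν - t ν₀) - (α - t ν₀) = t ν - α := by ring
    rw [e] at h4
    rw [w.map_sub_swap α (t ν), w.map_sub_swap (t ρ) (t ν), h4]
    exact stmt11_pdv_indep h hν₀ν hρ

lemma stmt11_val_eval [IsAlgClosed L] (w : Valuation L Γ') (p : L[X]) (x : L) :
    w (p.eval x) = w p.leadingCoeff * ((p.roots.map fun r => w (x - r)).prod) := by
  conv_lhs => rw [(IsAlgClosed.splits p).eq_prod_roots]
  rw [Polynomial.eval_mul, Polynomial.eval_C, map_mul, Polynomial.eval_multiset_prod,
    map_multiset_prod, Multiset.map_map, Multiset.map_map]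
  congr 1
  refine congrArg _ (Multiset.map_congr rfl fun r _ => ?_)
  simp

lemma stmt11_gwz_alg {C₁ C₂ δ : Γ'} {a b : ℕ} (hδ : δ ≠ 0) (hab : b ≤ a) :
    C₁ * δ ^ a / (C₂ * δ ^ b) = (C₁ / C₂) * δ ^ (a - b) := by
  rw [← div_mul_div_comm, pow_sub₀ δ hδ hab, ← div_eq_mul_inv]

lemma stmt11_pcv_key [IsAlgClosed L] [Nonempty Λ] (hnomax : ∀ ν : Λ, ∃ ρ, ν < ρ)
    (h : IsPseudoConvergent w t) (p : L[X]) (hp : p ≠ 0) :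
    ∃ N : Λ, ∃ C : Γ', C ≠ 0 ∧ ∀ ν ρ : Λ, N ≤ ν → ν < ρ →
      w (p.eval (t ν)) = C * w (t ρ - t ν) ^
        (p.roots.filter fun r => IsPseudoLimitPcv w t r).card := by
  classical
  have hdich : ∀ r : L, ¬ IsPseudoLimitPcv w t r →
      ∃ N c, c ≠ 0 ∧ ∀ ν, N ≤ ν → w (t ν - r) = c := fun r hr =>
    (stmt11_pcv_dichotomy hnomax h r).resolve_left hr
  choose! g c hc0 hcv using hdich
  obtain ⟨N, hN⟩ := Finset.exists_le (p.roots.toFinset.image g)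
  refine ⟨N, w p.leadingCoeff *
    ((p.roots.filter fun r => ¬ IsPseudoLimitPcv w t r).map c).prod, ?_, ?_⟩
  · apply mul_ne_zero
    · exact (Valuation.ne_zero_iff w).2 (Polynomial.leadingCoeff_ne_zero.2 hp)
    · rw [Ne, Multiset.prod_eq_zero_iff]
      intro hx
      obtain ⟨r, hr, hr0⟩ := Multiset.mem_map.1 hx
      exact hc0 r (Multiset.mem_filter.1 hr).2 hr0
  · intro ν ρ hν hρ
    rw [stmt11_val_eval w p (t ν)]
    conv_lhs => rw [← Multiset.filter_add_not (fun r => IsPseudoLimitPcv w t r) p.roots]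
    rw [Multiset.map_add, Multiset.prod_add]
    have hpl : (p.roots.filter fun r => IsPseudoLimitPcv w t r).map (fun r => w (t ν - r))
        = Multiset.replicate (p.roots.filter fun r => IsPseudoLimitPcv w t r).card
            (w (t ρ - t ν)) := by
      rw [Multiset.eq_replicate]
      refine ⟨Multiset.card_map _ _, fun x hx => ?_⟩
      obtain ⟨r, hr, rfl⟩ := Multiset.mem_map.1 hx
      rw [w.map_sub_swap]
      exact (Multiset.mem_filter.1 hr).2 hρ
    have hconst : (p.roots.filter fun r => ¬IsPseudoLimitPcv w t r).map (fun r => w (t ν - r))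
        = (p.roots.filter fun r => ¬IsPseudoLimitPcv w t r).map c := by
      refine Multiset.map_congr rfl fun r hr => ?_
      have h1 := Multiset.mem_filter.1 hr
      refine hcv r h1.2 ν (le_trans ?_ hν)
      exact hN _ (Finset.mem_image_of_mem g (Multiset.mem_toFinset.2 h1.1))
    rw [hpl, hconst, Multiset.prod_replicate, mul_comm (w (t ρ - t ν) ^ _), ← mul_assoc]

lemma stmt11_pdv_key [IsAlgClosed L] [Nonempty Λ] (hnomax : ∀ ν : Λ, ∃ ρ, ν < ρ)
    (h : IsPseudoDivergent w t) (p : L[X]) (hp : p ≠ 0) :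
    ∃ N : Λ, ∃ C : Γ', C ≠ 0 ∧ ∀ ν ρ : Λ, N ≤ ν → ρ < ν →
      w (p.eval (t ν)) = C * w (t ν - t ρ) ^
        (p.roots.filter fun r => IsPseudoLimitPdv w t r).card := by
  classical
  have hdich : ∀ r : L, ¬ IsPseudoLimitPdv w t r →
      ∃ N c, c ≠ 0 ∧ ∀ ν, N ≤ ν → w (t ν - r) = c := fun r hr =>
    (stmt11_pdv_dichotomy hnomax h r).resolve_left hr
  choose! g c hc0 hcv using hdich
  have hpldef : ∀ r : L, IsPseudoLimitPdv w t r →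
      ∃ N : Λ, ∀ ν, N ≤ ν → ∀ ρ, ρ < ν → w (r - t ν) = w (t ρ - t ν) := by
    rintro r ⟨N, hN⟩
    exact ⟨N, fun ν hν ρ hρ => hN hν hρ⟩
  choose! g₁ hg₁ using hpldef
  obtain ⟨N, hN⟩ := Finset.exists_le
    ((p.roots.toFinset.image g) ∪ (p.roots.toFinset.image g₁))
  refine ⟨N, w p.leadingCoeff *
    ((p.roots.filter fun r => ¬ IsPseudoLimitPdv w t r).map c).prod, ?_, ?_⟩
  · apply mul_ne_zero
    · exact (Valuation.ne_zero_iff w).2 (Polynomial.leadingCoeff_ne_zero.2 hp)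
    · rw [Ne, Multiset.prod_eq_zero_iff]
      intro hx
      obtain ⟨r, hr, hr0⟩ := Multiset.mem_map.1 hx
      exact hc0 r (Multiset.mem_filter.1 hr).2 hr0
  · intro ν ρ hν hρ
    rw [stmt11_val_eval w p (t ν)]
    conv_lhs => rw [← Multiset.filter_add_not (fun r => IsPseudoLimitPdv w t r) p.roots]
    rw [Multiset.map_add, Multiset.prod_add]
    have hpl : (p.roots.filter fun r => IsPseudoLimitPdv w t r).map (fun r => w (t ν - r))
        = Multiset.replicate (p.roots.filter fun r => IsPseudoLimitPdv w t r).card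
            (w (t ν - t ρ)) := by
      rw [Multiset.eq_replicate]
      refine ⟨Multiset.card_map _ _, fun x hx => ?_⟩
      obtain ⟨r, hr, rfl⟩ := Multiset.mem_map.1 hx
      have h1 := Multiset.mem_filter.1 hr
      have hgν : g₁ r ≤ ν := le_trans (hN _ (Finset.mem_union_right _
        (Finset.mem_image_of_mem g₁ (Multiset.mem_toFinset.2 h1.1)))) hν
      have h5 := hg₁ r h1.2 ν hgν ρ hρ
      rw [w.map_sub_swap (t ν) r, h5, w.map_sub_swap (t ρ) (t ν)]
    have hconst : (p.roots.filter fun r => ¬IsPseudoLimitPdv w t r).map (fun r => w (t ν - r))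
        = (p.roots.filter fun r => ¬IsPseudoLimitPdv w t r).map c := by
      refine Multiset.map_congr rfl fun r hr => ?_
      have h1 := Multiset.mem_filter.1 hr
      refine hcv r h1.2 ν (le_trans ?_ hν)
      exact hN _ (Finset.mem_union_left _
        (Finset.mem_image_of_mem g (Multiset.mem_toFinset.2 h1.1)))
    rw [hpl, hconst, Multiset.prod_replicate, mul_comm (w (t ν - t ρ) ^ _), ← mul_assoc]

lemma stmt11_spm_iff_pcv [Nonempty Λ] (hnomax : ∀ ν : Λ, ∃ ρ, ν < ρ)
    (h : IsPseudoConvergent w t) (r : L) :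
    IsPseudoLimitSPM w t r ↔ IsPseudoLimitPcv w t r := by
  constructor
  · rintro (⟨_, hpl⟩ | ⟨hdv, _⟩)
    · exact hpl
    · obtain ⟨ν₀⟩ := ‹Nonempty Λ›
      obtain ⟨ν₁, h1⟩ := hnomax ν₀
      obtain ⟨ν₂, h2⟩ := hnomax ν₁
      exact absurd (hdv h1 h2) (h h1 h2).asymm
  · intro hpl
    exact Or.inl ⟨h, hpl⟩

lemma stmt11_spm_iff_pdv [Nonempty Λ] (hnomax : ∀ ν : Λ, ∃ ρ, ν < ρ)
    (h : IsPseudoDivergent w t) (r : L) :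
    IsPseudoLimitSPM w t r ↔ IsPseudoLimitPdv w t r := by
  constructor
  · rintro (⟨hcv, _⟩ | ⟨_, hpl⟩)
    · obtain ⟨ν₀⟩ := ‹Nonempty Λ›
      obtain ⟨ν₁, h1⟩ := hnomax ν₀
      obtain ⟨ν₂, h2⟩ := hnomax ν₁
      exact absurd (hcv h1 h2) (h h1 h2).asymm
    · exact hpl
  · intro hpl
    exact Or.inr ⟨h, hpl⟩

end StmtElevenAux

section StmtElevenMain

open Polynomial

variable {K : Type*} [Field K] {Γ : Type*} [LinearOrderedCommGroupWithZero Γ]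
variable {Λ' : Type*} [LinearOrder Λ']

lemma stmt11_wrap_pcv (v : Valuation K Γ) (g : Λ' → K)
    (hnomax : ∀ ν : Λ', ∃ ρ, ν < ρ)
    (hmono : ∀ ⦃ν ρ : Λ'⦄, ν < ρ → v (g ρ) < v (g ν)) :
    IsPseudoConvergent v g ∧ IsPseudoLimitPcv v g 0 ∧
      {β | IsPseudoLimitPcv v g β} = BreadthPcv v g := by
  have hdiff : ∀ ⦃ν ρ : Λ'⦄, ν < ρ → v (g ρ - g ν) = v (g ν) :=
    fun ν ρ h => v.map_sub_eq_of_lt_right (hmono h)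
  refine ⟨?_, ?_, ?_⟩
  · intro ν ρ σ h1 h2
    rw [hdiff h2, hdiff h1]
    exact hmono h1
  · intro ν ρ h1
    rw [zero_sub, v.map_neg, hdiff h1]
  · ext β
    simp only [Set.mem_setOf_eq, BreadthPcv]
    constructor
    · intro hβ ν ρ h1
      obtain ⟨σ, hσ⟩ := hnomax ρ
      have h2 : v (β - g ρ) = v (g ρ) := by rw [hβ hσ, hdiff hσ]
      have hβρ : v β ≤ v (g ρ) := by
        calc v β = v ((β - g ρ) + g ρ) := by rw [sub_add_cancel]
        _ ≤ max (v (β - g ρ)) (v (g ρ)) := v.map_add _ _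
        _ = v (g ρ) := by rw [h2, max_self]
      rw [hdiff h1]
      exact lt_of_le_of_lt hβρ (hmono h1)
    · intro hβ ν ρ h1
      have hb : v β < v (g ν) := by have := hβ h1; rwa [hdiff h1] at this
      rw [hdiff h1]
      exact v.map_sub_eq_of_lt_right hb

lemma stmt11_wrap_pdv [Nonempty Λ'] (v : Valuation K Γ) (g : Λ' → K)
    (hnomax : ∀ ν : Λ', ∃ ρ, ν < ρ)
    (hmono : ∀ ⦃ν ρ : Λ'⦄, ν < ρ → v (g ν) < v (g ρ)) :
    IsPseudoDivergent v g ∧ IsPseudoLimitPdv v g 0 ∧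
      {β | IsPseudoLimitPdv v g β} = BreadthPdv v g := by
  have hdiff : ∀ ⦃ρ ν : Λ'⦄, ρ < ν → v (g ρ - g ν) = v (g ν) :=
    fun ρ ν h => v.map_sub_eq_of_lt_right (hmono h)
  have hdiff2 : ∀ ⦃ρ ν : Λ'⦄, ρ < ν → v (g ν - g ρ) = v (g ν) := by
    intro ρ ν h
    rw [v.map_sub_swap]
    exact hdiff h
  refine ⟨?_, ?_, ?_⟩
  · intro ν ρ σ h1 h2
    rw [hdiff2 h1, hdiff2 h2]
    exact hmono h2
  · refine ⟨Classical.arbitrary Λ', fun ν _ ρ hρ => ?_⟩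
    rw [zero_sub, v.map_neg, hdiff hρ]
  · ext β
    simp only [Set.mem_setOf_eq, BreadthPdv, IsPseudoLimitPdv]
    constructor
    · rintro ⟨M, hM⟩
      obtain ⟨b, hb⟩ := hnomax M
      obtain ⟨c, hc⟩ := hnomax b
      have h2 : v (β - g b) = v (g b) := by rw [hM hb.le hb, hdiff hb]
      have hβb : v β ≤ v (g b) := by
        calc v β = v ((β - g b) + g b) := by rw [sub_add_cancel]
        _ ≤ max (v (β - g b)) (v (g b)) := v.map_add _ _
        _ = v (g b) := by rw [h2, max_self]
      exact ⟨c, b, hc, by rw [hdiff hc]; exact lt_of_le_of_lt hβb (hmono hc)⟩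
    · rintro ⟨ν₀, ρ₀, h0, hβ⟩
      rw [hdiff h0] at hβ
      refine ⟨ν₀, fun ν hν ρ hρ => ?_⟩
      have hβν : v β < v (g ν) := by
        rcases hν.lt_or_eq with h | h
        · exact hβ.trans (hmono h)
        · rwa [← h]
      rw [hdiff hρ]
      exact v.map_sub_eq_of_lt_right hβν

variable {Λ : Type*} [LinearOrder Λ]
variable {Γ'' : Type*} [LinearOrderedCommGroupWithZero Γ'']

lemma stmt11_main_pcv [Nonempty Λ] (v : Valuation K Γ) (hnomax : ∀ ν : Λ, ∃ ρ : Λ, ν < ρ)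
    (s : Λ → K) (u : Valuation (AlgebraicClosure K) Γ'')
    (hu : (u.comap (algebraMap K (AlgebraicClosure K))).IsEquiv v)
    (φ : RatFunc K) (hdeg : 0 < degdom u s φ)
    (hcv : IsPseudoConvergent v s) :
    ∃ N : Λ, ∀ ⦃ν ρ : Λ⦄, N ≤ ν → ν < ρ →
      v (RatFunc.eval (RingHom.id K) (s ρ) φ) < v (RatFunc.eval (RingHom.id K) (s ν) φ) := by
  classical
  set i := algebraMap K (AlgebraicClosure K) with hi
  set t : Λ → AlgebraicClosure K := fun ν => i (s ν) with ht
  have hlt : ∀ x y : K, u (i x) < u (i y) ↔ v x < v y := by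
    intro x y
    have h := Valuation.IsEquiv.lt_iff_lt hu (x := x) (y := y)
    simpa [Valuation.comap_apply] using h
  have hcv' : IsPseudoConvergent u t := by
    intro ν ρ σ h1 h2
    have e1 : t σ - t ρ = i (s σ - s ρ) := by simp [ht, map_sub]
    have e2 : t ρ - t ν = i (s ρ - s ν) := by simp [ht, map_sub]
    rw [e1, e2]
    exact (hlt _ _).2 (hcv h1 h2)
  have hφ0 : φ ≠ 0 := by
    rintro rfl
    unfold degdom at hdeg
    simp only [RatFunc.num_zero, Polynomial.map_zero, Polynomial.roots_zero,
      Multiset.filter_zero, Multiset.card_zero, Nat.cast_zero, zero_sub] at hdeg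
    omega
  set p := φ.num.map i with hpdef
  set q := φ.denom.map i with hqdef
  have hp : p ≠ 0 := Polynomial.map_ne_zero (RatFunc.num_ne_zero hφ0)
  have hq : q ≠ 0 := Polynomial.map_ne_zero (RatFunc.denom_ne_zero φ)
  obtain ⟨N₁, C₁, hC₁, h₁⟩ := stmt11_pcv_key hnomax hcv' p hp
  obtain ⟨N₂, C₂, hC₂, h₂⟩ := stmt11_pcv_key hnomax hcv' q hq
  have hab : (q.roots.filter fun r => IsPseudoLimitPcv u t r).card <
      (p.roots.filter fun r => IsPseudoLimitPcv u t r).card := by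
    unfold degdom at hdeg
    have e1 : ((φ.num.map (algebraMap K (AlgebraicClosure K))).roots.filter
        (fun x => IsPseudoLimitSPM u (fun ν => algebraMap K (AlgebraicClosure K) (s ν)) x))
        = (p.roots.filter fun r => IsPseudoLimitPcv u t r) :=
      Multiset.filter_congr (fun x _ => stmt11_spm_iff_pcv hnomax hcv' x)
    have e2 : ((φ.denom.map (algebraMap K (AlgebraicClosure K))).roots.filter
        (fun x => IsPseudoLimitSPM u (fun ν => algebraMap K (AlgebraicClosure K) (s ν)) x))
        = (q.roots.filter fun r => IsPseudoLimitPcv u t r) :=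
      Multiset.filter_congr (fun x _ => stmt11_spm_iff_pcv hnomax hcv' x)
    rw [e1, e2] at hdeg
    omega
  have heval : ∀ x : K, i (RatFunc.eval (RingHom.id K) x φ)
      = p.eval (i x) / q.eval (i x) := by
    intro x
    simp only [RatFunc.eval]
    rw [map_div₀, Polynomial.hom_eval₂, Polynomial.hom_eval₂, RingHom.comp_id,
      ← Polynomial.eval_map, ← Polynomial.eval_map]
  have hC : C₁ / C₂ ≠ 0 := div_ne_zero hC₁ hC₂
  have hval : ∀ ν ρ : Λ, max N₁ N₂ ≤ ν → ν < ρ →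
      u (i (RatFunc.eval (RingHom.id K) (s ν) φ)) = (C₁ / C₂) * u (t ρ - t ν) ^
        ((p.roots.filter fun r => IsPseudoLimitPcv u t r).card
          - (q.roots.filter fun r => IsPseudoLimitPcv u t r).card) := by
    intro ν ρ hν hρ
    have hδ : u (t ρ - t ν) ≠ 0 := (stmt11_pcv_pos hnomax hcv' hρ).ne'
    rw [heval, map_div₀, h₁ ν ρ (le_trans (le_max_left _ _) hν) hρ,
      h₂ ν ρ (le_trans (le_max_right _ _) hν) hρ, stmt11_gwz_alg hδ hab.le]
  refine ⟨max N₁ N₂, fun ν ρ hν hρ => ?_⟩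
  rw [← hlt]
  obtain ⟨σ, hσ⟩ := hnomax ρ
  rw [hval ν ρ hν hρ, hval ρ σ (le_trans hν hρ.le) hσ]
  exact mul_lt_mul_of_pos_left
    (pow_lt_pow_left₀ (hcv' hρ hσ) zero_le' (Nat.sub_ne_zero_of_lt hab)) (zero_lt_iff.2 hC)

lemma stmt11_main_pdv [Nonempty Λ] (v : Valuation K Γ) (hnomax : ∀ ν : Λ, ∃ ρ : Λ, ν < ρ)
    (s : Λ → K) (u : Valuation (AlgebraicClosure K) Γ'')
    (hu : (u.comap (algebraMap K (AlgebraicClosure K))).IsEquiv v)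
    (φ : RatFunc K) (hdeg : 0 < degdom u s φ)
    (hdv : IsPseudoDivergent v s) :
    ∃ N : Λ, ∀ ⦃ν ρ : Λ⦄, N ≤ ν → ν < ρ →
      v (RatFunc.eval (RingHom.id K) (s ν) φ) < v (RatFunc.eval (RingHom.id K) (s ρ) φ) := by
  classical
  set i := algebraMap K (AlgebraicClosure K) with hi
  set t : Λ → AlgebraicClosure K := fun ν => i (s ν) with ht
  have hlt : ∀ x y : K, u (i x) < u (i y) ↔ v x < v y := by
    intro x y
    have h := Valuation.IsEquiv.lt_iff_lt hu (x := x) (y := y)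
    simpa [Valuation.comap_apply] using h
  have hdv' : IsPseudoDivergent u t := by
    intro ν ρ σ h1 h2
    have e1 : t σ - t ρ = i (s σ - s ρ) := by simp [ht, map_sub]
    have e2 : t ρ - t ν = i (s ρ - s ν) := by simp [ht, map_sub]
    rw [e1, e2]
    exact (hlt _ _).2 (hdv h1 h2)
  have hφ0 : φ ≠ 0 := by
    rintro rfl
    unfold degdom at hdeg
    simp only [RatFunc.num_zero, Polynomial.map_zero, Polynomial.roots_zero,
      Multiset.filter_zero, Multiset.card_zero, Nat.cast_zero, zero_sub] at hdeg
    omega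
  set p := φ.num.map i with hpdef
  set q := φ.denom.map i with hqdef
  have hp : p ≠ 0 := Polynomial.map_ne_zero (RatFunc.num_ne_zero hφ0)
  have hq : q ≠ 0 := Polynomial.map_ne_zero (RatFunc.denom_ne_zero φ)
  obtain ⟨N₁, C₁, hC₁, h₁⟩ := stmt11_pdv_key hnomax hdv' p hp
  obtain ⟨N₂, C₂, hC₂, h₂⟩ := stmt11_pdv_key hnomax hdv' q hq
  have hab : (q.roots.filter fun r => IsPseudoLimitPdv u t r).card <
      (p.roots.filter fun r => IsPseudoLimitPdv u t r).card := by
    unfold degdom at hdeg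
    have e1 : ((φ.num.map (algebraMap K (AlgebraicClosure K))).roots.filter
        (fun x => IsPseudoLimitSPM u (fun ν => algebraMap K (AlgebraicClosure K) (s ν)) x))
        = (p.roots.filter fun r => IsPseudoLimitPdv u t r) :=
      Multiset.filter_congr (fun x _ => stmt11_spm_iff_pdv hnomax hdv' x)
    have e2 : ((φ.denom.map (algebraMap K (AlgebraicClosure K))).roots.filter
        (fun x => IsPseudoLimitSPM u (fun ν => algebraMap K (AlgebraicClosure K) (s ν)) x))
        = (q.roots.filter fun r => IsPseudoLimitPdv u t r) :=
      Multiset.filter_congr (fun x _ => stmt11_spm_iff_pdv hnomax hdv' x)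
    rw [e1, e2] at hdeg
    omega
  have heval : ∀ x : K, i (RatFunc.eval (RingHom.id K) x φ)
      = p.eval (i x) / q.eval (i x) := by
    intro x
    simp only [RatFunc.eval]
    rw [map_div₀, Polynomial.hom_eval₂, Polynomial.hom_eval₂, RingHom.comp_id,
      ← Polynomial.eval_map, ← Polynomial.eval_map]
  have hC : C₁ / C₂ ≠ 0 := div_ne_zero hC₁ hC₂
  obtain ⟨m₁, hm₁⟩ := hnomax (max N₁ N₂)
  obtain ⟨N₀, hN₀⟩ := hnomax m₁
  have hval : ∀ ν ρ : Λ, N₀ ≤ ν → ρ < ν → max N₁ N₂ < ρ →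
      u (i (RatFunc.eval (RingHom.id K) (s ν) φ)) = (C₁ / C₂) * u (t ν - t ρ) ^
        ((p.roots.filter fun r => IsPseudoLimitPdv u t r).card
          - (q.roots.filter fun r => IsPseudoLimitPdv u t r).card) := by
    intro ν ρ hν hρ hm
    have hN₁ : N₁ ≤ ν := le_trans (le_max_left _ _) (le_trans (hm₁.trans hN₀).le hν)
    have hN₂ : N₂ ≤ ν := le_trans (le_max_right _ _) (le_trans (hm₁.trans hN₀).le hν)
    have hδ : u (t ν - t ρ) ≠ 0 := (lt_of_le_of_lt zero_le' (hdv' hm hρ)).ne'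
    rw [heval, map_div₀, h₁ ν ρ hN₁ hρ, h₂ ν ρ hN₂ hρ, stmt11_gwz_alg hδ hab.le]
  refine ⟨N₀, fun ν ρ hν hρ => ?_⟩
  rw [← hlt]
  have hm₁ν : m₁ < ν := hN₀.trans_le hν
  rw [hval ν m₁ hν hm₁ν hm₁, hval ρ ν (le_trans hν hρ.le) hρ (hm₁.trans hm₁ν)]
  exact mul_lt_mul_of_pos_left
    (pow_lt_pow_left₀ (hdv' hm₁ν hρ) zero_le' (Nat.sub_ne_zero_of_lt hab)) (zero_lt_iff.2 hC)

end StmtElevenMain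

/-- Let `E` be a strictly pseudo-monotone sequence and `φ ∈ K(X)`
non-constant with `degdom_E(φ) > 0`. Then `{φ(s_ν)}` is definitively a strictly
pseudo-monotone sequence of the same kind as `E`, `0` is a pseudo-limit of `φ(E)`, and the
set of pseudo-limits of `φ(E)` equals its breadth ideal. -/
theorem stmt11 {K : Type*} [Field K] {Γ : Type*} [LinearOrderedCommGroupWithZero Γ]
    (v : Valuation K Γ) {Λ : Type*} [LinearOrder Λ] [WellFoundedLT Λ] [Nonempty Λ]
    (hnomax : ∀ ν : Λ, ∃ ρ : Λ, ν < ρ) (s : Λ → K)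
    (hE : IsPseudoConvergent v s ∨ IsPseudoDivergent v s)
    {Γ' : Type*} [LinearOrderedCommGroupWithZero Γ']
    (u : Valuation (AlgebraicClosure K) Γ')
    (hu : (u.comap (algebraMap K (AlgebraicClosure K))).IsEquiv v)
    (φ : RatFunc K) (hφ : ¬ ∃ a : K, φ = RatFunc.C a)
    (hdeg : 0 < degdom u s φ) :
    (IsPseudoConvergent v s → ∃ N : Λ,
      IsPseudoConvergent v
        (fun ν : {ν : Λ // N ≤ ν} => RatFunc.eval (RingHom.id K) (s ν.1) φ) ∧
      IsPseudoLimitPcv v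
        (fun ν : {ν : Λ // N ≤ ν} => RatFunc.eval (RingHom.id K) (s ν.1) φ) 0 ∧
      {β : K | IsPseudoLimitPcv v
          (fun ν : {ν : Λ // N ≤ ν} => RatFunc.eval (RingHom.id K) (s ν.1) φ) β} =
        BreadthPcv v (fun ν : {ν : Λ // N ≤ ν} => RatFunc.eval (RingHom.id K) (s ν.1) φ)) ∧
    (IsPseudoDivergent v s → ∃ N : Λ,
      IsPseudoDivergent v
        (fun ν : {ν : Λ // N ≤ ν} => RatFunc.eval (RingHom.id K) (s ν.1) φ) ∧
      IsPseudoLimitPdv v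
        (fun ν : {ν : Λ // N ≤ ν} => RatFunc.eval (RingHom.id K) (s ν.1) φ) 0 ∧
      {β : K | IsPseudoLimitPdv v
          (fun ν : {ν : Λ // N ≤ ν} => RatFunc.eval (RingHom.id K) (s ν.1) φ) β} =
        BreadthPdv v (fun ν : {ν : Λ // N ≤ ν} => RatFunc.eval (RingHom.id K) (s ν.1) φ)) := by
  constructor
  · intro hcv
    obtain ⟨N, hmono⟩ := stmt11_main_pcv v hnomax s u hu φ hdeg hcv
    refine ⟨N, ?_⟩
    have hnomax' : ∀ ν : {ν : Λ // N ≤ ν}, ∃ ρ, ν < ρ := by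
      rintro ⟨ν, hν⟩
      obtain ⟨ρ, hρ⟩ := hnomax ν
      exact ⟨⟨ρ, hν.trans hρ.le⟩, Subtype.mk_lt_mk.2 hρ⟩
    exact stmt11_wrap_pcv v _ hnomax' (fun ν ρ h => hmono ν.2 (Subtype.coe_lt_coe.2 h))
  · intro hdv
    obtain ⟨N, hmono⟩ := stmt11_main_pdv v hnomax s u hu φ hdeg hdv
    refine ⟨N, ?_⟩
    haveI : Nonempty {ν : Λ // N ≤ ν} := ⟨⟨N, le_refl N⟩⟩
    have hnomax' : ∀ ν : {ν : Λ // N ≤ ν}, ∃ ρ, ν < ρ := by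
      rintro ⟨ν, hν⟩
      obtain ⟨ρ, hρ⟩ := hnomax ν
      exact ⟨⟨ρ, hν.trans hρ.le⟩, Subtype.mk_lt_mk.2 hρ⟩
    exact stmt11_wrap_pdv v _ hnomax' (fun ν ρ h => hmono ν.2 (Subtype.coe_lt_coe.2 h))
end

section
/- Let V be a valuation domain, E ⊂ K a pseudo-stationary sequence on V, and P ∈ Spec(V). Then E is pseudo-stationary with respect to V_P and Br_{V_P}(E) = Br_V(E)·V_P. -/
open scoped Pointwise Classical

/-!
Since `V ⊆ V_P`, equal `v`-values stay equal under `v_P`, so `E` stays pseudo-stationary.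
Both breadth ideals are principal, generated by any difference `c = s ν - s μ` with `ν ≠ μ`:
`Br_V(E) = cV` and `Br_{V_P}(E) = cV_P = (cV)·V_P`.
-/

namespace ValuationSubring

variable {K : Type*} [Field K]

theorem valuation_le_valuation_of_le {A B : ValuationSubring K} (hAB : A ≤ B) {x y : K}
    (h : A.valuation x ≤ A.valuation y) : B.valuation x ≤ B.valuation y :=
  A.monotone_mapOfLE B hAB h

theorem mem_span_singleton_of_valuation_le (B : ValuationSubring K) {x c : K}
    (h : B.valuation x ≤ B.valuation c) : x ∈ Submodule.span B {c} := by
  rcases eq_or_ne c 0 with rfl | hc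
  · simp_all
  have hxc : x / c ∈ B := by
    rw [← B.valuation_le_one_iff, map_div₀]
    exact div_le_one_of_le₀ h zero_le
  rw [show x = (⟨x / c, hxc⟩ : B) • c from (div_mul_cancel₀ x hc).symm]
  exact Submodule.smul_mem _ _ (Submodule.mem_span_singleton_self c)

end ValuationSubring

section Breadth

variable {K : Type*} [Field K] {Λ : Type*} {s : Λ → K}

theorem IsPseudoStationary.of_le {A B : ValuationSubring K} (hAB : A ≤ B)
    (hs : IsPseudoStationary A.valuation s) : IsPseudoStationary B.valuation s :=
  ⟨hs.1, fun _ _ _ _ h h' => by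
    rw [← A.mapOfLE_valuation_apply B hAB, hs.2 h h', A.mapOfLE_valuation_apply]⟩

theorem breadthPst_mono {A B : ValuationSubring K} (hAB : A ≤ B) :
    BreadthPst A.valuation s ⊆ BreadthPst B.valuation s :=
  fun _ hx _ _ h => ValuationSubring.valuation_le_valuation_of_le hAB (hx h)

theorem breadthPst_eq_univ_of_subsingleton [Subsingleton Λ] {Γ : Type*}
    [LinearOrderedCommGroupWithZero Γ] (v : Valuation K Γ) : BreadthPst v s = Set.univ :=
  Set.eq_univ_of_forall fun _ ν μ h => absurd (Subsingleton.elim ν μ) h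

theorem IsPseudoStationary.sub_mem_breadthPst {Γ : Type*} [LinearOrderedCommGroupWithZero Γ]
    {v : Valuation K Γ} (hs : IsPseudoStationary v s) {ν μ : Λ} (h : ν ≠ μ) :
    s ν - s μ ∈ BreadthPst v s :=
  fun _ _ h' => (hs.2 h h').le

variable (s) in
def breadthPstSubmodule (B : ValuationSubring K) : Submodule B K where
  carrier := BreadthPst B.valuation s
  add_mem' ha hb _ _ h := (B.valuation.map_add _ _).trans (max_le (ha h) (hb h))
  zero_mem' _ _ _ := by simp
  smul_mem' r x hx _ _ h := by
    have hr : B.valuation (r : K) ≤ 1 := (B.valuation_le_one_iff _).2 r.2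
    calc B.valuation (r * x) = B.valuation (r : K) * B.valuation x := map_mul _ _ _
      _ ≤ B.valuation x := mul_le_of_le_one_left' hr
      _ ≤ _ := hx h

end Breadth

theorem stmt14_general {K : Type*} [Field K] (A : ValuationSubring K) (P : Ideal A) [P.IsPrime]
    {Λ : Type*} (s : Λ → K)
    (hE : IsPseudoStationary A.valuation s) :
    IsPseudoStationary (A.ofPrime P).valuation s ∧
    BreadthPst (A.ofPrime P).valuation s =
      ↑(Submodule.span (A.ofPrime P) (BreadthPst A.valuation s)) := by
  have hAB := A.le_ofPrime P
  refine ⟨hE.of_le hAB, Set.Subset.antisymm ?_ ?_⟩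
  · rcases subsingleton_or_nontrivial Λ with _ | ⟨ν, μ, hνμ⟩
    · simp [breadthPst_eq_univ_of_subsingleton]
    · intro x hx
      exact Submodule.span_mono (Set.singleton_subset_iff.2 (hE.sub_mem_breadthPst hνμ))
        ((A.ofPrime P).mem_span_singleton_of_valuation_le (hx hνμ))
  · exact Submodule.span_le (p := breadthPstSubmodule s (A.ofPrime P)) |>.2 (breadthPst_mono hAB)

/-- Let `E` be a pseudo-stationary sequence on `V` and `P ∈ Spec(V)`. Then
`E` is pseudo-stationary with respect to the localization `V_P` (realized as `A.ofPrime P`)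
and `Br_{V_P}(E) = Br_V(E)·V_P`. -/
theorem stmt14 {K : Type*} [Field K] (A : ValuationSubring K) (P : Ideal A) [P.IsPrime]
    {Λ : Type*} [LinearOrder Λ] [WellFoundedLT Λ] [Nonempty Λ]
    (hnomax : ∀ ν : Λ, ∃ ρ : Λ, ν < ρ) (s : Λ → K)
    (hE : IsPseudoStationary A.valuation s) :
    IsPseudoStationary (A.ofPrime P).valuation s ∧
    BreadthPst (A.ofPrime P).valuation s =
      ↑(Submodule.span (A.ofPrime P) (BreadthPst A.valuation s)) :=
  stmt14_general A P s hE
end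

section
/- Let V be a valuation domain with quotient field K, W an extension of V to K(X), and suppose L(W) is nonempty and not all of K. Then: for all α, β ∈ L(W), w(X−α) = w(X−β); exactly one of L₁(W), L₂(W) is nonempty; if L₁(W) ≠ ∅ then L₁(W) = α + I for some α ∈ K and some fractional or integral V-submodule I of K (or L₁(W) = K); and if L₂(W) ≠ ∅ then L₂(W) = α + cV for some α, c ∈ K. -/
open scoped Pointwise Classical

/-- `𝓛₁(W) = {α ∈ K : w(X−α) ∉ Γ_v}`, for an extension `w` of `v` to `K(X)`
(`v` being the restriction `w ∘ C`). -/
def L1 {K : Type*} [Field K] {Γ : Type*} [LinearOrderedCommGroupWithZero Γ]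
    (w : Valuation (RatFunc K) Γ) : Set K :=
  {α : K | ∀ c : K, c ≠ 0 → w (RatFunc.X - RatFunc.C α) ≠ w (RatFunc.C c)}

/-- `𝓛₂(W) = {α ∈ K : w(X−α) ∈ Γ_v, and w(X−α+c) = w(X−α) whenever v(c) = w(X−α)}`. -/
def L2 {K : Type*} [Field K] {Γ : Type*} [LinearOrderedCommGroupWithZero Γ]
    (w : Valuation (RatFunc K) Γ) : Set K :=
  {α : K | (∃ c : K, c ≠ 0 ∧ w (RatFunc.X - RatFunc.C α) = w (RatFunc.C c)) ∧
    ∀ c : K, w (RatFunc.C c) = w (RatFunc.X - RatFunc.C α) →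
      w (RatFunc.X - RatFunc.C α + RatFunc.C c) = w (RatFunc.X - RatFunc.C α)}

section Proof16

variable {K : Type*} [Field K] {Γ : Type*} [LinearOrderedCommGroupWithZero Γ]
variable (w : Valuation (RatFunc K) Γ)

private lemma X_sub_C_ne_zero (α : K) : RatFunc.X - RatFunc.C α ≠ 0 := by
  rw [sub_ne_zero, ← RatFunc.algebraMap_X, ← RatFunc.algebraMap_C]
  intro h
  exact Polynomial.X_ne_C α (RatFunc.algebraMap_injective K h)

private lemma wXC_ne_zero (α : K) : w (RatFunc.X - RatFunc.C α) ≠ 0 := by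
  rw [Ne, Valuation.zero_iff]
  exact X_sub_C_ne_zero α

private lemma sameVal {α β : K} (hα : α ∈ L1 w ∪ L2 w) (hβ : β ∈ L1 w ∪ L2 w) :
    w (RatFunc.X - RatFunc.C α) = w (RatFunc.X - RatFunc.C β) := by
  by_contra hne
  set d := α - β with hdd
  have hd : d ≠ 0 := by
    intro h
    exact hne (by rw [sub_eq_zero.mp h])
  have hdecβ : RatFunc.X - RatFunc.C β = (RatFunc.X - RatFunc.C α) + RatFunc.C d := by
    rw [hdd, map_sub]; ring
  have hdecα : RatFunc.X - RatFunc.C α = (RatFunc.X - RatFunc.C β) + RatFunc.C (-d) := by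
    rw [map_neg, hdd, map_sub]; ring
  have h1 : w (RatFunc.X - RatFunc.C α) ≠ w (RatFunc.C d) := by
    rcases hα with h | h
    · exact h d hd
    · intro he
      exact hne (by rw [hdecβ, h.2 d he.symm])
  have h2 : w (RatFunc.X - RatFunc.C β)
      = max (w (RatFunc.X - RatFunc.C α)) (w (RatFunc.C d)) := by
    rw [hdecβ]; exact Valuation.map_add_of_distinct_val w h1
  have h3 : w (RatFunc.X - RatFunc.C β) = w (RatFunc.C d) := by
    rcases max_cases (w (RatFunc.X - RatFunc.C α)) (w (RatFunc.C d)) with ⟨hm, _⟩ | ⟨hm, _⟩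
    · exact absurd (h2.trans hm).symm hne
    · exact h2.trans hm
  rcases hβ with h | h
  · exact h d hd h3
  · have hvd : w (RatFunc.C (-d)) = w (RatFunc.X - RatFunc.C β) := by
      rw [map_neg, Valuation.map_neg, h3]
    have := h.2 (-d) hvd
    rw [← hdecα] at this
    exact hne this

private lemma not_both (h1 : (L1 w).Nonempty) (h2 : (L2 w).Nonempty) : False := by
  obtain ⟨α, hα⟩ := h1
  obtain ⟨β, hβ⟩ := h2
  obtain ⟨c, hc, hcv⟩ := hβ.1
  exact hα c hc ((sameVal w (Or.inl hα) (Or.inr hβ)).trans hcv)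

private lemma L2_stab {α : K} (hα : α ∈ L2 w) {e : K}
    (he : w (RatFunc.C e) ≤ w (RatFunc.X - RatFunc.C α)) :
    w (RatFunc.X - RatFunc.C α + RatFunc.C e) = w (RatFunc.X - RatFunc.C α) := by
  rcases he.lt_or_eq with hlt | heq
  · rw [Valuation.map_add_of_distinct_val w (ne_of_gt hlt)]
    exact max_eq_left hlt.le
  · exact hα.2 e heq

private lemma L1_struct {α : K} (hα : α ∈ L1 w) :
    ∃ I : Submodule (w.comap RatFunc.C).integer K, L1 w = (α + ·) '' (I : Set K) := by
  set γ := w (RatFunc.X - RatFunc.C α) with hγ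
  have hγ0 : γ ≠ 0 := wXC_ne_zero w α
  refine ⟨{ carrier := {x : K | w (RatFunc.C x) < γ}
            add_mem' := fun {x y} hx hy => by
              have := (w.comap RatFunc.C).map_add x y
              simp only [Valuation.comap_apply] at this
              exact lt_of_le_of_lt this (max_lt hx hy)
            zero_mem' := by
              simpa using zero_lt_iff.mpr hγ0
            smul_mem' := fun c {x} hx => by
              simp only [Set.mem_setOf_eq, Subring.smul_def, smul_eq_mul, map_mul,
                Valuation.map_mul]
              calc w (RatFunc.C (c : K)) * w (RatFunc.C x)
                  ≤ w (RatFunc.C x) := mul_le_of_le_one_left' c.2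
                _ < γ := hx }, ?_⟩
  ext β
  simp only [Set.mem_image, SetLike.mem_coe, Submodule.mem_mk, AddSubmonoid.mem_mk,
    AddSubsemigroup.mem_mk, Set.mem_setOf_eq]
  constructor
  · intro hβ
    refine ⟨β - α, ?_, by ring⟩
    have hvβ : w (RatFunc.X - RatFunc.C β) = γ := (sameVal w (Or.inl hα) (Or.inl hβ)).symm
    by_cases hc : β - α = 0
    · rw [hc, map_zero, Valuation.map_zero]
      exact zero_lt_iff.mpr hγ0
    · have hdec : RatFunc.X - RatFunc.C α
          = (RatFunc.X - RatFunc.C β) + RatFunc.C (β - α) := by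
        rw [map_sub]; ring
      have hne : w (RatFunc.X - RatFunc.C β) ≠ w (RatFunc.C (β - α)) :=
        hβ (β - α) hc
      have hmax : γ = max (w (RatFunc.X - RatFunc.C β)) (w (RatFunc.C (β - α))) := by
        rw [hγ, hdec]; exact Valuation.map_add_of_distinct_val w hne
      rw [hvβ] at hmax hne
      rcases lt_or_ge (w (RatFunc.C (β - α))) γ with h | h
      · exact h
      · exact absurd (hmax.trans (max_eq_right h)) hne
  · rintro ⟨x, hx, rfl⟩
    have hdec : RatFunc.X - RatFunc.C (α + x)
        = (RatFunc.X - RatFunc.C α) + RatFunc.C (-x) := by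
      rw [map_neg, map_add]; ring
    have hne : w (RatFunc.X - RatFunc.C α) ≠ w (RatFunc.C (-x)) := by
      rw [map_neg, Valuation.map_neg, ← hγ]
      exact ne_of_gt hx
    have hval : w (RatFunc.X - RatFunc.C (α + x)) = γ := by
      rw [hdec, Valuation.map_add_of_distinct_val w hne, map_neg, Valuation.map_neg]
      exact max_eq_left hx.le
    intro c hc hcv
    rw [hval] at hcv
    exact hα c hc hcv

private lemma L2_struct {α : K} (hα : α ∈ L2 w) {c₀ : K} (hc₀ : c₀ ≠ 0)
    (hcv : w (RatFunc.X - RatFunc.C α) = w (RatFunc.C c₀)) :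
    L2 w = {x : K | w (RatFunc.C (x - α)) ≤ w (RatFunc.C c₀)} := by
  set γ := w (RatFunc.X - RatFunc.C α) with hγ
  ext β
  simp only [Set.mem_setOf_eq]
  constructor
  · intro hβ
    by_contra hgt
    push_neg at hgt
    rw [← hcv] at hgt
    have hvβ : w (RatFunc.X - RatFunc.C β) = γ := (sameVal w (Or.inr hα) (Or.inr hβ)).symm
    have hdec : RatFunc.X - RatFunc.C β
        = (RatFunc.X - RatFunc.C α) + RatFunc.C (-(β - α)) := by
      rw [map_neg, map_sub]; ring
    have hne : w (RatFunc.X - RatFunc.C α) ≠ w (RatFunc.C (-(β - α))) := by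
      rw [map_neg, Valuation.map_neg]
      exact ne_of_lt hgt
    have : w (RatFunc.X - RatFunc.C β)
        = max (w (RatFunc.X - RatFunc.C α)) (w (RatFunc.C (-(β - α)))) := by
      rw [hdec]; exact Valuation.map_add_of_distinct_val w hne
    rw [hvβ, map_neg, Valuation.map_neg, max_eq_right hgt.le] at this
    exact absurd (this ▸ hgt) (lt_irrefl γ)
  · intro hle
    rw [← hcv] at hle
    have hdec : RatFunc.X - RatFunc.C β
        = (RatFunc.X - RatFunc.C α) + RatFunc.C (-(β - α)) := by
      rw [map_neg, map_sub]; ring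
    have hle' : w (RatFunc.C (-(β - α))) ≤ γ := by
      rwa [map_neg, Valuation.map_neg]
    have hvβ : w (RatFunc.X - RatFunc.C β) = γ := by
      rw [hdec]; exact L2_stab w hα hle'
    refine ⟨⟨c₀, hc₀, hvβ.trans hcv⟩, ?_⟩
    intro c hc
    rw [hvβ] at hc
    have hdec2 : RatFunc.X - RatFunc.C β + RatFunc.C c
        = (RatFunc.X - RatFunc.C α) + RatFunc.C (c - (β - α)) := by
      rw [map_sub, map_sub]; ring
    have hle2 : w (RatFunc.C (c - (β - α))) ≤ γ := by
      rw [map_sub]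
      exact le_trans (Valuation.map_sub w _ _) (max_le hc.le hle)
    rw [hdec2, hvβ, L2_stab w hα hle2]

end Proof16

/-- Let `W` be an extension of `V` to `K(X)` (given by a valuation `w` on
`K(X)`, with `V` the valuation ring of the restriction of `w` to `K`), and suppose
`𝓛(W) = 𝓛₁(W) ∪ 𝓛₂(W)` is nonempty and not all of `K`. Then: `w(X−α) = w(X−β)` for all
`α, β ∈ 𝓛(W)`; exactly one of `𝓛₁(W)`, `𝓛₂(W)` is nonempty; if `𝓛₁(W) ≠ ∅` then
`𝓛₁(W) = K` or `𝓛₁(W) = α + I` for some `α ∈ K` and some `V`-submodule `I` of `K`; and if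
`𝓛₂(W) ≠ ∅` then `𝓛₂(W) = α + cV` for some `α, c ∈ K`. -/
theorem stmt16 {K : Type*} [Field K] {Γ : Type*} [LinearOrderedCommGroupWithZero Γ]
    (w : Valuation (RatFunc K) Γ)
    (hne : (L1 w ∪ L2 w).Nonempty) (hneK : L1 w ∪ L2 w ≠ Set.univ) :
    (∀ α ∈ L1 w ∪ L2 w, ∀ β ∈ L1 w ∪ L2 w,
        w (RatFunc.X - RatFunc.C α) = w (RatFunc.X - RatFunc.C β)) ∧
    Xor' (L1 w).Nonempty (L2 w).Nonempty ∧
    ((L1 w).Nonempty → L1 w = Set.univ ∨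
      ∃ (α : K) (I : Submodule (w.comap RatFunc.C).integer K),
        L1 w = (α + ·) '' (I : Set K)) ∧
    ((L2 w).Nonempty → ∃ α c : K,
      L2 w = {x : K | (w.comap RatFunc.C) (x - α) ≤ (w.comap RatFunc.C) c}) := by
  refine ⟨fun α hα β hβ => sameVal w hα hβ, ?_, ?_, ?_⟩
  · obtain ⟨α, hα⟩ := hne
    rcases hα with h | h
    · exact Or.inl ⟨⟨α, h⟩, fun h2 => not_both w ⟨α, h⟩ h2⟩
    · exact Or.inr ⟨⟨α, h⟩, fun h1 => not_both w h1 ⟨α, h⟩⟩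
  · rintro ⟨α, hα⟩
    exact Or.inr ⟨α, L1_struct w hα⟩
  · rintro ⟨α, hα⟩
    obtain ⟨c₀, hc₀, hcv⟩ := hα.1
    refine ⟨α, c₀, ?_⟩
    have := L2_struct w hα hc₀ hcv
    simpa only [Valuation.comap_apply] using this
end

section
/- Let K be an algebraically closed field, V a valuation domain of K, and W an extension of V to K(X). Then V ⊂ W is an immediate extension (same value group and same residue field) if and only if L(W) = ∅. -/
open scoped Pointwise Classical

/-- The extension of `V` to `K(X)` given by the valuation `w` is immediate: same value group
(every `w(φ)`, `φ ≠ 0`, equals `w(C c)` for some nonzero `c ∈ K`) and same residue field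
(every unit of `W` is congruent to a constant modulo the maximal ideal). -/
def ImmediateExt {K : Type*} [Field K] {Γ : Type*} [LinearOrderedCommGroupWithZero Γ]
    (w : Valuation (RatFunc K) Γ) : Prop :=
  (∀ φ : RatFunc K, φ ≠ 0 → ∃ c : K, c ≠ 0 ∧ w φ = w (RatFunc.C c)) ∧
  (∀ φ : RatFunc K, w φ = 1 → ∃ c : K, w (φ - RatFunc.C c) < 1)

/-!
Call `φ ∈ K(X)` residually constant if some `c ∈ K` satisfies `w(φ - c) < w(φ)`, i.e. `φ` has
the value and the residue of a constant. The extension is immediate exactly when every nonzero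
`φ` is residually constant, and `α ∉ 𝓛(W)` says exactly that `X - α` is. Residually constant
elements are closed under products and inverses, and since `K` is algebraically closed every
nonzero rational function is a constant times a product of integer powers of linear factors `X - α`.
-/

open Polynomial

section ResiduallyConstant

variable (K : Type*) {L Γ : Type*} [Field K] [Field L] [Algebra K L]
  [LinearOrderedCommGroupWithZero Γ]

def IsResiduallyConstant (w : Valuation L Γ) (φ : L) : Prop :=
  ∃ c : K, w (φ - algebraMap K L c) < w φ

variable {K} {w : Valuation L Γ} {φ ψ : L}

namespace IsResiduallyConstant

lemma map_pos (h : IsResiduallyConstant K w φ) : 0 < w φ :=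
  zero_le.trans_lt h.choose_spec

lemma map_algebraMap_eq {c : K} (h : w (φ - algebraMap K L c) < w φ) :
    w (algebraMap K L c) = w φ :=
  w.map_eq_of_sub_lt (by rwa [w.map_sub_swap])

lemma exists_map_eq (h : IsResiduallyConstant K w φ) :
    ∃ c : K, c ≠ 0 ∧ w φ = w (algebraMap K L c) := by
  obtain ⟨c, hc⟩ := h
  refine ⟨c, ?_, (map_algebraMap_eq hc).symm⟩
  rintro rfl
  simp at hc

lemma mul (hφ : IsResiduallyConstant K w φ) (hψ : IsResiduallyConstant K w ψ) :
    IsResiduallyConstant K w (φ * ψ) := by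
  obtain ⟨c, hc⟩ := hφ
  obtain ⟨d, hd⟩ := hψ
  have hsplit : φ * ψ - algebraMap K L (c * d) =
      φ * (ψ - algebraMap K L d) + (φ - algebraMap K L c) * algebraMap K L d := by
    rw [map_mul]; ring
  refine ⟨c * d, ?_⟩
  rw [hsplit, w.map_mul]
  refine w.map_add_lt ?_ ?_
  · rw [w.map_mul]
    exact mul_lt_mul_of_pos_left hd (map_pos ⟨c, hc⟩)
  · rw [w.map_mul, map_algebraMap_eq hd]
    exact mul_lt_mul_of_pos_right hc (map_pos ⟨d, hd⟩)

lemma inv (hφ : IsResiduallyConstant K w φ) : IsResiduallyConstant K w φ⁻¹ := by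
  obtain ⟨c, hc⟩ := hφ
  have hpos : 0 < w φ := map_pos ⟨c, hc⟩
  have hcφ := map_algebraMap_eq hc
  have hφ0 : φ ≠ 0 := w.ne_zero_iff.mp hpos.ne'
  have hc0 : algebraMap K L c ≠ 0 := w.ne_zero_iff.mp (hcφ ▸ hpos.ne')
  refine ⟨c⁻¹, ?_⟩
  rw [map_inv₀, inv_sub_inv hφ0 hc0, map_div₀, w.map_mul, hcφ, w.map_sub_swap, map_inv₀,
    div_lt_iff₀ (mul_pos hpos hpos), inv_mul_cancel_left₀ hpos.ne']
  exact hc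

end IsResiduallyConstant

lemma isResiduallyConstant_algebraMap {c : K} (hc : c ≠ 0) :
    IsResiduallyConstant K w (algebraMap K L c) :=
  ⟨c, by simpa [zero_lt_iff] using hc⟩

lemma isResiduallyConstant_aeval_of_splits {x : L}
    (hx : ∀ α : K, IsResiduallyConstant K w (x - algebraMap K L α))
    {p : K[X]} (hp : p.Splits) (hp0 : p ≠ 0) : IsResiduallyConstant K w (aeval x p) := by
  rw [hp.eq_prod_roots, map_mul, aeval_C, map_multiset_prod, Multiset.map_map]
  refine (isResiduallyConstant_algebraMap (leadingCoeff_ne_zero.mpr hp0)).mul ?_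
  refine Multiset.prod_induction _ _ (fun _ _ ha hb => ha.mul hb) ?_ ?_
  · simpa using isResiduallyConstant_algebraMap (w := w) (one_ne_zero (α := K))
  · simp only [Multiset.mem_map, Function.comp_apply]
    rintro _ ⟨α, -, rfl⟩
    simpa using hx α

end ResiduallyConstant

section RatFunc

variable {K Γ : Type*} [Field K] [LinearOrderedCommGroupWithZero Γ]
  {w : Valuation (RatFunc K) Γ}

lemma isResiduallyConstant_of_forall_X_sub_C [IsAlgClosed K]
    (h : ∀ α : K, IsResiduallyConstant K w (RatFunc.X - RatFunc.C α))
    {φ : RatFunc K} (hφ : φ ≠ 0) : IsResiduallyConstant K w φ := by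
  have hpoly (p : K[X]) (hp : p ≠ 0) :
      IsResiduallyConstant K w (algebraMap K[X] (RatFunc K) p) := by
    simpa using isResiduallyConstant_aeval_of_splits h (IsAlgClosed.splits p) hp
  rw [← RatFunc.num_div_denom φ, div_eq_mul_inv]
  exact (hpoly _ (RatFunc.num_ne_zero hφ)).mul (hpoly _ (RatFunc.denom_ne_zero φ)).inv

lemma immediateExt_iff_forall_isResiduallyConstant :
    ImmediateExt w ↔ ∀ φ : RatFunc K, φ ≠ 0 → IsResiduallyConstant K w φ := by
  constructor
  · rintro ⟨hvalue, hresidue⟩ φ hφ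
    obtain ⟨c, hc, hφc⟩ := hvalue φ hφ
    have hC : RatFunc.C c ≠ 0 := by simpa using hc
    have hunit : w (φ * (RatFunc.C c)⁻¹) = 1 := by
      rw [w.map_mul, map_inv₀, hφc, mul_inv_cancel₀ (w.ne_zero_iff.mpr hC)]
    obtain ⟨d, hd⟩ := hresidue _ hunit
    have hres : IsResiduallyConstant K w (φ * (RatFunc.C c)⁻¹) := ⟨d, hd.trans_eq hunit.symm⟩
    simpa [hC] using hres.mul (isResiduallyConstant_algebraMap hc)
  · intro h
    refine ⟨fun φ hφ => (h φ hφ).exists_map_eq, fun φ hφ => ?_⟩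
    obtain ⟨c, hc⟩ := h φ (w.ne_zero_iff.mp (hφ ▸ one_ne_zero))
    exact ⟨c, hφ ▸ hc⟩

lemma notMem_L1_union_L2_iff {α : K} :
    α ∉ L1 w ∪ L2 w ↔ IsResiduallyConstant K w (RatFunc.X - RatFunc.C α) := by
  constructor
  · intro hα
    simp only [Set.mem_union, not_or, L1, L2, Set.mem_ofPred_eq, not_and, not_forall,
      not_not, exists_prop] at hα
    obtain ⟨hc₀, hL2⟩ := hα
    obtain ⟨c, hcv, hne⟩ := hL2 hc₀
    have hlt : w (RatFunc.X - RatFunc.C α + RatFunc.C c) < w (RatFunc.X - RatFunc.C α) :=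
      ((w.map_add _ _).trans (by rw [hcv, max_self])).lt_of_ne hne
    exact ⟨-c, by simpa using hlt⟩
  · rintro hres (hL1 | ⟨-, hL2⟩)
    · obtain ⟨c, hc, hcv⟩ := hres.exists_map_eq
      exact hL1 c hc hcv
    · obtain ⟨c, hc⟩ := hres
      have hfix := hL2 (-c) (by simpa using IsResiduallyConstant.map_algebraMap_eq hc)
      rw [map_neg, ← sub_eq_add_neg] at hfix
      exact hc.ne hfix

end RatFunc

/-- Let `K` be algebraically closed, `V` a valuation domain of `K`, and `W`
an extension of `V` to `K(X)` (given by a valuation `w` on `K(X)`, with `V` the valuation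
ring of the restriction). Then `V ⊂ W` is immediate if and only if `𝓛(W) = ∅`. -/
theorem stmt17 {K : Type*} [Field K] [IsAlgClosed K]
    {Γ : Type*} [LinearOrderedCommGroupWithZero Γ] (w : Valuation (RatFunc K) Γ) :
    ImmediateExt w ↔ L1 w ∪ L2 w = ∅ := by
  rw [immediateExt_iff_forall_isResiduallyConstant, Set.eq_empty_iff_forall_notMem]
  simp only [notMem_L1_union_L2_iff]
  refine ⟨fun h α => h _ ?_, fun h φ hφ => isResiduallyConstant_of_forall_X_sub_C h hφ⟩
  rw [← RatFunc.algebraMap_X, ← RatFunc.algebraMap_C, ← map_sub]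
  exact (map_ne_zero_iff _ (RatFunc.algebraMap_injective K)).mpr (X_sub_C_ne_zero α)
end
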